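/- arXiv:1808.03074 — 14 statements merged into one kernel-verified Lean document; each statement's English description precedes it below -/
import Mathlib

section
/- Let F be a finite field with q elements. The number of pairs (g0, g1) ∈ F² × F² such that all four entries g0,1, g0,2, g1,1, g1,2 are nonzero and g1,1·g0,2 − g1,2·g0,1 ≠ 0 equals (q−1)³·(q−2). -/
/-!
Choose `g0,1`, `g0,2`, `g1,1` nonzero freely, `(q - 1)³` ways. The determinant condition then
says exactly that `g1,2 ≠ g1,1 g0,2 / g0,1`, a nonzero value, so `g1,2` avoids two distinct
elements and has `q - 2` choices.
-/

theorem Nat.card_subtype_notMem_finset {α : Type*} [Finite α] (s : Finset α) :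
    Nat.card {x : α // x ∉ s} = Nat.card α - s.card := by
  have := Fintype.ofFinite α
  classical
  rw [Nat.card_eq_fintype_card, Fintype.card_subtype_compl, Fintype.card_coe,
    Nat.card_eq_fintype_card]

theorem Nat.card_subtype_ne {α : Type*} [Finite α] (a : α) :
    Nat.card {x : α // x ≠ a} = Nat.card α - 1 := by
  simpa using Nat.card_subtype_notMem_finset {a}

theorem Nat.card_subtype_ne_and_ne {α : Type*} [Finite α] {a b : α} (hab : a ≠ b) :
    Nat.card {x : α // x ≠ a ∧ x ≠ b} = Nat.card α - 2 := by
  classical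
  simpa [Finset.card_pair hab, not_or] using Nat.card_subtype_notMem_finset {a, b}

theorem Nat.card_subtype_prod_of_card_fiber {α β : Type*} [Finite α] [Finite β]
    {P : α → Prop} {Q : α → β → Prop} {k : ℕ} (hQ : ∀ a, P a → Nat.card {b // Q a b} = k) :
    Nat.card {x : α × β // P x.1 ∧ Q x.1 x.2} = Nat.card {a // P a} * k := by
  have := Fintype.ofFinite {a // P a}
  let e : {x : α × β // P x.1 ∧ Q x.1 x.2} ≃ Σ a : {a // P a}, {b // Q a b} :=
    { toFun x := ⟨⟨x.1.1, x.2.1⟩, x.1.2, x.2.2⟩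
      invFun y := ⟨(y.1, y.2), y.1.2, y.2.2⟩ }
  rw [Nat.card_congr e, Nat.card_sigma, Finset.sum_congr rfl fun a _ => hQ a.1 a.2,
    Finset.sum_const, Finset.card_univ, smul_eq_mul, Nat.card_eq_fintype_card]

/-- Let F be a finite field with q elements. The number of pairs
(g0, g1) ∈ F² × F² such that all four entries are nonzero and
g1,1·g0,2 − g1,2·g0,1 ≠ 0 equals (q−1)³·(q−2). -/
theorem stmt0 (F : Type*) [Field F] [Fintype F] :
    Nat.card {p : (F × F) × (F × F) //
      p.1.1 ≠ 0 ∧ p.1.2 ≠ 0 ∧ p.2.1 ≠ 0 ∧ p.2.2 ≠ 0 ∧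
      p.2.1 * p.1.2 - p.2.2 * p.1.1 ≠ 0}
    = (Fintype.card F - 1) ^ 3 * (Fintype.card F - 2) := by
  have hdet {a b c d : F} (ha : a ≠ 0) : c * b - d * a ≠ 0 ↔ d ≠ c * b / a := by
    rw [sub_ne_zero, ne_comm, Ne, Ne, eq_div_iff ha]
  calc _ = Nat.card {x : ((F × F) × F) × F //
        ((x.1.1.1 ≠ 0 ∧ x.1.1.2 ≠ 0) ∧ x.1.2 ≠ 0) ∧ (x.2 ≠ 0 ∧ x.2 ≠ x.1.2 * x.1.1.2 / x.1.1.1)} :=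
        Nat.card_congr <| (Equiv.prodAssoc (F × F) F F).symm.subtypeEquiv
          fun ⟨⟨a, b⟩, c, d⟩ => by
            simp only [Equiv.prodAssoc_symm_apply, and_assoc]
            exact and_congr_right fun ha => by rw [hdet ha]
    _ = (Nat.card F - 1) * (Nat.card F - 1) * (Nat.card F - 1) * (Nat.card F - 2) := by
        rw [Nat.card_subtype_prod_of_card_fiber
            (P := fun x : (F × F) × F => (x.1.1 ≠ 0 ∧ x.1.2 ≠ 0) ∧ x.2 ≠ 0)
            (Q := fun x d => d ≠ 0 ∧ d ≠ x.2 * x.1.2 / x.1.1) fun x hx =>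
            Nat.card_subtype_ne_and_ne (div_ne_zero (mul_ne_zero hx.2 hx.1.2) hx.1.1).symm,
          Nat.card_subtype_prod_of_card_fiber
            (P := fun x : F × F => x.1 ≠ 0 ∧ x.2 ≠ 0) (Q := fun _ c => c ≠ 0) fun _ _ =>
            Nat.card_subtype_ne 0,
          Nat.card_subtype_prod_of_card_fiber (P := fun a : F => a ≠ 0) (Q := fun _ b => b ≠ 0)
            fun _ _ => Nat.card_subtype_ne 0,
          Nat.card_subtype_ne 0]
    _ = _ := by rw [Nat.card_eq_fintype_card]; ring
end

section
/- Let F be a finite field. There exist vectors g0, g1 ∈ F² with all four entries g0,1, g0,2, g1,1, g1,2 nonzero and g1,1·g0,2 − g1,2·g0,1 ≠ 0 if and only if |F| ≥ 3. -/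
/-! The ratio `(g1.2 * g0.1) / (g1.1 * g0.2)` of a pair of vectors as in the statement is an element
of `F` other than `0` and `1`; conversely any such element `a` gives the pair `(1, 1)`, `(1, a)`.
Such an element exists exactly when `|F| ≥ 3`. -/

theorem Fintype.three_le_card_iff_exists_ne_ne {α : Type*} [Fintype α] [DecidableEq α] {x y : α}
    (hxy : x ≠ y) : 3 ≤ Fintype.card α ↔ ∃ a : α, a ≠ x ∧ a ≠ y := by
  constructor
  · intro h
    have hcompl : 0 < ({x, y}ᶜ : Finset α).card := by
      rw [Finset.card_compl, Finset.card_pair hxy]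
      omega
    obtain ⟨a, ha⟩ := Finset.card_pos.mp hcompl
    exact ⟨a, by simpa [not_or] using ha⟩
  · rintro ⟨a, hax, hay⟩
    exact Fintype.two_lt_card_iff.mpr ⟨x, y, a, hxy, hax.symm, hay.symm⟩

theorem exists_pair_entries_ne_zero_det_ne_zero_iff (F : Type*) [Field F] :
    (∃ g0 g1 : F × F, g0.1 ≠ 0 ∧ g0.2 ≠ 0 ∧ g1.1 ≠ 0 ∧ g1.2 ≠ 0 ∧
      g1.1 * g0.2 - g1.2 * g0.1 ≠ 0) ↔ ∃ a : F, a ≠ 0 ∧ a ≠ 1 := by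
  constructor
  · rintro ⟨g0, g1, h01, h02, h11, h12, hdet⟩
    have hden : g1.1 * g0.2 ≠ 0 := mul_ne_zero h11 h02
    refine ⟨g1.2 * g0.1 / (g1.1 * g0.2), div_ne_zero (mul_ne_zero h12 h01) hden, ?_⟩
    rw [Ne, div_eq_one_iff_eq hden]
    exact fun h => hdet (sub_eq_zero.mpr h.symm)
  · rintro ⟨a, ha0, ha1⟩
    refine ⟨(1, 1), (1, a), one_ne_zero, one_ne_zero, one_ne_zero, ha0, ?_⟩
    simpa using sub_ne_zero.mpr (Ne.symm ha1)

/-- Let F be a finite field. There exist vectors g0, g1 ∈ F² with all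
four entries nonzero and g1,1·g0,2 − g1,2·g0,1 ≠ 0 if and only if |F| ≥ 3. -/
theorem stmt1 (F : Type*) [Field F] [Fintype F] :
    (∃ g0 g1 : F × F, g0.1 ≠ 0 ∧ g0.2 ≠ 0 ∧ g1.1 ≠ 0 ∧ g1.2 ≠ 0 ∧
      g1.1 * g0.2 - g1.2 * g0.1 ≠ 0) ↔ 3 ≤ Fintype.card F := by
  classical
  rw [exists_pair_entries_ne_zero_det_ne_zero_iff,
    Fintype.three_le_card_iff_exists_ne_ne (zero_ne_one' F)]
end

section
/- Let n ≥ 3 be an integer and F a finite field with q elements. The number of pairs (g0, g1) ∈ Fⁿ × Fⁿ such that every entry of g0 is nonzero and for all indices 1 ≤ i < j ≤ n one has g0,i·g1,j − g0,j·g1,i ≠ 0 equals q·(q−1)^(n+1)·∏_{i=2}^{n−1}(q−i). -/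
/-!
Since `g₀ i * g₁ j - g₀ j * g₁ i = g₀ i * g₀ j * (g₁ j / g₀ j - g₁ i / g₀ i)`, a pair
`(g₀, g₁)` is admissible exactly when `g₀` has unit entries and the slopes `g₁ i / g₀ i`
are pairwise distinct. Hence `(g₀, g₁) ↦ (g₀, g₁ / g₀)` identifies the admissible pairs
with `(Fin n → Fˣ) × (Fin n ↪ F)`, which has `(q - 1) ^ n * q (q - 1) ⋯ (q - n + 1)`
elements.
-/

open Function

section

variable {ι F : Type*} [LinearOrder ι] [Field F]

theorem injective_div_iff_mul_sub_mul_ne_zero {g₀ g₁ : ι → F} (hg₀ : ∀ i, g₀ i ≠ 0) :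
    Injective (g₁ / g₀) ↔ ∀ i j, i < j → g₀ i * g₁ j - g₀ j * g₁ i ≠ 0 := by
  have cross_eq : ∀ i j,
      g₀ i * g₁ j - g₀ j * g₁ i = g₀ i * g₀ j * ((g₁ / g₀) j - (g₁ / g₀) i) := by
    intro i j
    simp only [Pi.div_apply]
    field_simp [hg₀ i, hg₀ j]
  simp only [cross_eq, ne_eq, mul_eq_zero, hg₀, false_or, sub_eq_zero]
  constructor
  · exact fun h i j hij => h.ne hij.ne'
  · intro h
    exact Injective.of_lt_imp_ne fun i j hij => Ne.symm (h i j hij)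

variable (ι F)

noncomputable def mdpGeneratorEquiv :
    {p : (ι → F) × (ι → F) //
      (∀ i, p.1 i ≠ 0) ∧ ∀ i j : ι, i < j → p.1 i * p.2 j - p.1 j * p.2 i ≠ 0}
    ≃ (ι → Fˣ) × (ι ↪ F) where
  toFun p := (fun i => Units.mk0 _ (p.2.1 i),
    ⟨p.1.2 / p.1.1, (injective_div_iff_mul_sub_mul_ne_zero p.2.1).2 p.2.2⟩)
  invFun ux := ⟨(fun i => ux.1 i, fun i => ux.1 i * ux.2 i), fun i => (ux.1 i).ne_zero,
    (injective_div_iff_mul_sub_mul_ne_zero fun i => (ux.1 i).ne_zero).1 <| by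
      convert ux.2.injective using 1
      ext i
      simp⟩
  left_inv p := by ext i <;> simp [mul_div_cancel₀ _ (p.2.1 i)]
  right_inv ux := by ext i <;> simp

theorem card_mdpGenerators [Fintype ι] [Fintype F] :
    Nat.card {p : (ι → F) × (ι → F) //
      (∀ i, p.1 i ≠ 0) ∧ ∀ i j : ι, i < j → p.1 i * p.2 j - p.1 j * p.2 i ≠ 0}
    = (Fintype.card F - 1) ^ Fintype.card ι *
      (Fintype.card F).descFactorial (Fintype.card ι) := by
  classical
  rw [Nat.card_congr (mdpGeneratorEquiv ι F), Nat.card_prod, Nat.card_eq_fintype_card,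
    Nat.card_eq_fintype_card, Fintype.card_fun, Fintype.card_units, Fintype.card_embedding_eq]

end

theorem Nat.descFactorial_eq_mul_mul_prod_Icc (q : ℕ) {n : ℕ} (hn : 2 ≤ n) :
    q.descFactorial n = q * (q - 1) * ∏ i ∈ Finset.Icc 2 (n - 1), (q - i) := by
  have hn_not_min : ¬IsMin n := by rw [isMin_iff_eq_bot, Nat.bot_eq_zero]; omega
  rw [Nat.descFactorial_eq_prod_range, ← Finset.prod_range_mul_prod_Ico _ hn,
    Finset.Icc_sub_one_right_eq_Ico_of_not_isMin hn_not_min]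
  simp [Finset.prod_range_succ]

/-- Let n ≥ 3 and F a finite field with q elements. The number of pairs
(g0, g1) ∈ Fⁿ × Fⁿ such that every entry of g0 is nonzero and for all 1 ≤ i < j ≤ n
one has g0,i·g1,j − g0,j·g1,i ≠ 0 equals q·(q−1)^(n+1)·∏_{i=2}^{n−1}(q−i). -/
theorem stmt2 (n : ℕ) (hn : 3 ≤ n) (F : Type*) [Field F] [Fintype F] :
    Nat.card {p : (Fin n → F) × (Fin n → F) //
      (∀ i, p.1 i ≠ 0) ∧ ∀ i j : Fin n, i < j → p.1 i * p.2 j - p.1 j * p.2 i ≠ 0}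
    = Fintype.card F * (Fintype.card F - 1) ^ (n + 1) *
      ∏ i ∈ Finset.Icc 2 (n - 1), (Fintype.card F - i) := by
  rw [card_mdpGenerators, Fintype.card_fin, Nat.descFactorial_eq_mul_mul_prod_Icc _ (by omega)]
  ring
end

section
/- Let n ≥ 3 be an integer and F a finite field. There exists a pair (g0, g1) ∈ Fⁿ × Fⁿ such that every entry of g0 is nonzero and for all indices 1 ≤ i < j ≤ n one has g0,i·g1,j − g0,j·g1,i ≠ 0, if and only if |F| ≥ n. -/
/-! Since every `g0 i` is nonzero, the determinant condition says exactly that the slopes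
`g1 i / g0 i` are pairwise distinct, so a valid pair amounts to `n` distinct elements of `F`
(conversely take `g0 = 1` and `g1` injective). -/

lemma injective_div_of_mul_sub_mul_ne_zero {ι F : Type*} [LinearOrder ι] [Field F]
    {g0 g1 : ι → F} (h0 : ∀ i, g0 i ≠ 0)
    (h1 : ∀ i j, i < j → g0 i * g1 j - g0 j * g1 i ≠ 0) :
    Function.Injective fun i => g1 i / g0 i := by
  have slope_ne : ∀ i j, i < j → g1 i / g0 i ≠ g1 j / g0 j := fun i j hij heq => by
    have hcross : g1 i * g0 j = g1 j * g0 i := (div_eq_div_iff (h0 i) (h0 j)).1 heq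
    exact h1 i j hij (by linear_combination -hcross)
  intro i j hij
  by_contra hne
  rcases lt_or_gt_of_ne hne with h | h
  · exact slope_ne i j h hij
  · exact slope_ne j i h hij.symm

theorem stmt3_general (n : ℕ) (F : Type*) [Field F] [Fintype F] :
    (∃ g0 g1 : Fin n → F,
      (∀ i, g0 i ≠ 0) ∧ ∀ i j : Fin n, i < j → g0 i * g1 j - g0 j * g1 i ≠ 0)
    ↔ n ≤ Fintype.card F := by
  constructor
  · rintro ⟨g0, g1, h0, h1⟩
    simpa using Fintype.card_le_of_injective _ (injective_div_of_mul_sub_mul_ne_zero h0 h1)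
  · intro hcard
    obtain ⟨f⟩ : Nonempty (Fin n ↪ F) :=
      Function.Embedding.nonempty_of_card_le (by simpa using hcard)
    refine ⟨1, f, fun _ => one_ne_zero, fun i j hij => ?_⟩
    simpa [sub_eq_zero] using hij.ne'

/-- Let n ≥ 3 and F a finite field. There exists (g0, g1) ∈ Fⁿ × Fⁿ with
every entry of g0 nonzero and, for all 1 ≤ i < j ≤ n, g0,i·g1,j − g0,j·g1,i ≠ 0,
if and only if |F| ≥ n. -/
theorem stmt3 (n : ℕ) (hn : 3 ≤ n) (F : Type*) [Field F] [Fintype F] :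
    (∃ g0 g1 : Fin n → F,
      (∀ i, g0 i ≠ 0) ∧ ∀ i j : Fin n, i < j → g0 i * g1 j - g0 j * g1 i ≠ 0)
    ↔ n ≤ Fintype.card F :=
  stmt3_general n F
end

section
/- Let n ≥ 3 be an integer and F a finite field with q elements. The number of pairs (h0, h1) ∈ Fⁿ × Fⁿ such that every entry of h0 is nonzero, every entry of h1 is nonzero, and for all indices 1 ≤ i < j ≤ n one has h0,i·h1,j − h0,j·h1,i ≠ 0, equals (q−1)^(n+1)·∏_{i=2}^{n}(q−i). -/
/-!
Because `h₀ i * h₁ j - h₀ j * h₁ i ≠ 0` says exactly that the ratios `h₁ i / h₀ i` and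
`h₁ j / h₀ j` differ, an admissible pair is the same as a vector `h₀` of units together with an
injective map `i ↦ h₁ i / h₀ i` into `Fˣ`. There are `(q - 1) ^ n` choices for the first and
`(q - 1) (q - 2) ⋯ (q - n)` for the second.
-/

open Finset Function

theorem Nat.descFactorial_pred_eq_prod_Icc (q n : ℕ) :
    (q - 1).descFactorial n = ∏ i ∈ Icc 1 n, (q - i) := by
  rw [Nat.descFactorial_eq_prod_range, ← Finset.Ico_add_one_right_eq_Icc, prod_Ico_eq_prod_range]
  exact prod_congr rfl fun i _ => by omega

section

variable {F : Type*} [Field F]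

theorem mul_sub_mul_ne_zero_iff_div_ne {a b c d : F} (ha : a ≠ 0) (hc : c ≠ 0) :
    a * d - c * b ≠ 0 ↔ b / a ≠ d / c := by
  rw [Ne, Ne, sub_eq_zero, div_eq_div_iff ha hc, mul_comm a d, mul_comm c b, eq_comm]

variable {ι : Type*} [LinearOrder ι]

theorem forall_lt_mul_sub_mul_ne_zero_iff_injective {h₀ h₁ : ι → F} (h₀_ne : ∀ i, h₀ i ≠ 0) :
    (∀ i j, i < j → h₀ i * h₁ j - h₀ j * h₁ i ≠ 0) ↔ Injective (fun i => h₁ i / h₀ i) := by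
  simp only [mul_sub_mul_ne_zero_iff_div_ne (h₀_ne _) (h₀_ne _)]
  rw [injective_iff_pairwise_ne, @pairwise_iff_lt _ _ _ ⟨fun _ _ => Ne.symm⟩]

def IsReverseMDPPair (h₀ h₁ : ι → F) : Prop :=
  (∀ i, h₀ i ≠ 0) ∧ (∀ i, h₁ i ≠ 0) ∧ ∀ i j, i < j → h₀ i * h₁ j - h₀ j * h₁ i ≠ 0

def reverseMDPPairEquiv :
    {p : (ι → F) × (ι → F) // IsReverseMDPPair p.1 p.2} ≃ (ι → Fˣ) × (ι ↪ Fˣ) where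
  toFun p :=
    (fun i => Units.mk0 (p.1.1 i) (p.2.1 i),
      ⟨fun i => Units.mk0 (p.1.2 i / p.1.1 i) (div_ne_zero (p.2.2.1 i) (p.2.1 i)), fun i j hij =>
        (forall_lt_mul_sub_mul_ne_zero_iff_injective p.2.1).1 p.2.2.2 (congrArg Units.val hij)⟩)
  invFun x :=
    ⟨(fun i => x.1 i, fun i => x.1 i * x.2 i), fun i => (x.1 i).ne_zero,
      fun i => mul_ne_zero (x.1 i).ne_zero (x.2 i).ne_zero, by
        rw [forall_lt_mul_sub_mul_ne_zero_iff_injective fun i => (x.1 i).ne_zero]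
        intro i j hij
        simpa [mul_div_cancel_left₀ _ (x.1 _).ne_zero, Units.val_inj] using hij⟩
  left_inv p := by
    ext i
    · rfl
    · exact mul_div_cancel₀ _ (p.2.1 i)
  right_inv x := by
    ext i
    · rfl
    · exact mul_div_cancel_left₀ _ (x.1 i).ne_zero

end

/-- Let n ≥ 3 and F a finite field with q elements. The number of pairs
(h0, h1) ∈ Fⁿ × Fⁿ with every entry of h0 nonzero, every entry of h1 nonzero, and for
all 1 ≤ i < j ≤ n, h0,i·h1,j − h0,j·h1,i ≠ 0, equals (q−1)^(n+1)·∏_{i=2}^{n}(q−i). -/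
theorem stmt4 (n : ℕ) (hn : 3 ≤ n) (F : Type*) [Field F] [Fintype F] :
    Nat.card {p : (Fin n → F) × (Fin n → F) //
      (∀ i, p.1 i ≠ 0) ∧ (∀ i, p.2 i ≠ 0) ∧
      ∀ i j : Fin n, i < j → p.1 i * p.2 j - p.1 j * p.2 i ≠ 0}
    = (Fintype.card F - 1) ^ (n + 1) * ∏ i ∈ Finset.Icc 2 n, (Fintype.card F - i) := by
  classical
  calc _ = Nat.card ((Fin n → Fˣ) × (Fin n ↪ Fˣ)) := Nat.card_congr reverseMDPPairEquiv
    _ = _ := by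
      rw [Nat.card_eq_fintype_card, Fintype.card_prod, Fintype.card_fun, Fintype.card_embedding_eq,
        Fintype.card_fin, Fintype.card_units, Nat.descFactorial_pred_eq_prod_Icc,
        ← insert_Icc_add_one_left_eq_Icc (by omega : 1 ≤ n), prod_insert (by simp), ← mul_assoc,
        pow_succ]
      rfl
end

section
/- Let n ≥ 3 be an integer and F a finite field. There exists a pair (h0, h1) ∈ Fⁿ × Fⁿ such that every entry of h0 is nonzero, every entry of h1 is nonzero, and for all indices 1 ≤ i < j ≤ n one has h0,i·h1,j − h0,j·h1,i ≠ 0, if and only if |F| ≥ n + 1. -/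
/-!
Two nonzero vectors `h0`, `h1` have all `2 × 2` minors `h0 i * h1 j - h0 j * h1 i` nonzero exactly
when the ratios `h0 i / h1 i` are pairwise distinct. These ratios are nonzero, so such vectors of
length `n` exist iff `Fˣ`, of cardinality `|F| - 1`, has at least `n` elements.
-/

section

variable {ι F : Type*} [Field F]

theorem minor_ne_zero_iff_div_ne_div {a b c d : F} (hb : b ≠ 0) (hd : d ≠ 0) :
    a * d - c * b ≠ 0 ↔ a / b ≠ c / d := by
  rw [ne_eq, ne_eq, sub_eq_zero, div_eq_div_iff hb hd]

theorem injective_div_of_minor_ne_zero [LinearOrder ι] {h0 h1 : ι → F}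
    (H1 : ∀ i, h1 i ≠ 0) (H : ∀ i j, i < j → h0 i * h1 j - h0 j * h1 i ≠ 0) :
    Function.Injective (h0 / h1) := by
  intro i j hij
  by_contra hne
  rcases lt_or_gt_of_ne hne with hlt | hgt
  · exact (minor_ne_zero_iff_div_ne_div (H1 i) (H1 j)).1 (H i j hlt) hij
  · exact (minor_ne_zero_iff_div_ne_div (H1 j) (H1 i)).1 (H j i hgt) hij.symm

theorem card_lt_card_of_minor_ne_zero [LinearOrder ι] [Fintype ι] [Fintype F] {h0 h1 : ι → F}
    (H0 : ∀ i, h0 i ≠ 0) (H1 : ∀ i, h1 i ≠ 0)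
    (H : ∀ i j, i < j → h0 i * h1 j - h0 j * h1 i ≠ 0) :
    Fintype.card ι < Fintype.card F := by
  classical
  let ratio : ι → Fˣ := fun i => Units.mk0 (h0 i / h1 i) (div_ne_zero (H0 i) (H1 i))
  have ratio_injective : Function.Injective ratio := fun i j hij =>
    injective_div_of_minor_ne_zero H1 H (congrArg Units.val hij)
  have card_le_units := Fintype.card_le_of_injective ratio ratio_injective
  rw [Fintype.card_units] at card_le_units
  have card_pos := Fintype.card_pos (α := F)
  omega

theorem exists_minor_ne_zero_of_card_lt [Fintype ι] [Fintype F]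
    (hcard : Fintype.card ι < Fintype.card F) :
    ∃ h0 h1 : ι → F, (∀ i, h0 i ≠ 0) ∧ (∀ i, h1 i ≠ 0) ∧
      ∀ i j, i ≠ j → h0 i * h1 j - h0 j * h1 i ≠ 0 := by
  classical
  have hle : Fintype.card ι ≤ Fintype.card Fˣ := by
    rw [Fintype.card_units]
    omega
  obtain ⟨g⟩ := Function.Embedding.nonempty_of_card_le hle
  refine ⟨fun i => g i, 1, fun i => (g i).ne_zero, fun _ => one_ne_zero, fun i j hij => ?_⟩
  rw [Pi.one_apply, Pi.one_apply, mul_one, mul_one, sub_ne_zero]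
  exact fun h => hij (g.injective (Units.ext h))

end

theorem stmt5_general (n : ℕ) (F : Type*) [Field F] [Fintype F] :
    (∃ h0 h1 : Fin n → F,
      (∀ i, h0 i ≠ 0) ∧ (∀ i, h1 i ≠ 0) ∧
      ∀ i j : Fin n, i < j → h0 i * h1 j - h0 j * h1 i ≠ 0)
    ↔ n + 1 ≤ Fintype.card F := by
  constructor
  · rintro ⟨h0, h1, H0, H1, H⟩
    simpa using card_lt_card_of_minor_ne_zero H0 H1 H
  · intro hcard
    obtain ⟨h0, h1, H0, H1, H⟩ :=
      exists_minor_ne_zero_of_card_lt (ι := Fin n) (F := F) (by simpa using hcard)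
    exact ⟨h0, h1, H0, H1, fun i j hij => H i j hij.ne⟩

/-- Let n ≥ 3 and F a finite field. There exists (h0, h1) ∈ Fⁿ × Fⁿ with
every entry of h0 nonzero, every entry of h1 nonzero, and for all 1 ≤ i < j ≤ n,
h0,i·h1,j − h0,j·h1,i ≠ 0, if and only if |F| ≥ n + 1. -/
theorem stmt5 (n : ℕ) (hn : 3 ≤ n) (F : Type*) [Field F] [Fintype F] :
    (∃ h0 h1 : Fin n → F,
      (∀ i, h0 i ≠ 0) ∧ (∀ i, h1 i ≠ 0) ∧
      ∀ i j : Fin n, i < j → h0 i * h1 j - h0 j * h1 i ≠ 0)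
    ↔ n + 1 ≤ Fintype.card F :=
  stmt5_general n F
end

section
/- Let n > k ≥ 1 and L ≥ 0 be integers. The number of strictly increasing integer sequences 1 ≤ j_1 < j_2 < ⋯ < j_{(L+1)(n−k)} ≤ (L+1)·n satisfying j_{s(n−k)} ≤ s·n for all s = 1, …, L is at most ∏_{s=0}^{L} C(n + s·k, n−k), where C(a,b) denotes the binomial coefficient. -/
/-!
Cut `j` into `L + 1` consecutive blocks of length `n - k`. Strict monotonicity from `j ≥ 1` and
the constraint at the end of each block (the global bound `(L + 1) n` for the last one) place
block `s` inside the interval `[s (n - k) + 1, (s + 1) n]`, which has at most `n + s k` elements.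
A strictly increasing block is determined by its image, an `(n - k)`-subset of that interval,
so `j` is determined by a tuple of such subsets.
-/

open Finset

def Finset.strictMonoEquivPowersetCard {α : Type*} [LinearOrder α] (s : Finset α) (m : ℕ) :
    {g : Fin m → α // StrictMono g ∧ ∀ i, g i ∈ s} ≃ s.powersetCard m where
  toFun g := ⟨univ.image g.1, mem_powersetCard.2
    ⟨by simpa [image_subset_iff] using g.2.2,
     by rw [card_image_of_injective _ g.2.1.injective, card_univ, Fintype.card_fin]⟩⟩
  invFun t := ⟨t.1.orderEmbOfFin (mem_powersetCard.1 t.2).2, (orderEmbOfFin _ _).strictMono,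
    fun i => (mem_powersetCard.1 t.2).1 (orderEmbOfFin_mem _ _ i)⟩
  left_inv g := Subtype.ext (orderEmbOfFin_unique _ (by simp) g.2.1).symm
  right_inv t := Subtype.ext (image_orderEmbOfFin_univ _ _)

instance {α : Type*} [LinearOrder α] (s : Finset α) (m : ℕ) :
    Finite {g : Fin m → α // StrictMono g ∧ ∀ i, g i ∈ s} :=
  .of_equiv _ (s.strictMonoEquivPowersetCard m).symm

theorem Finset.natCard_strictMono_mem {α : Type*} [LinearOrder α] (s : Finset α) (m : ℕ) :
    Nat.card {g : Fin m → α // StrictMono g ∧ ∀ i, g i ∈ s} = s.card.choose m := by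
  rw [Nat.card_congr (s.strictMonoEquivPowersetCard m), Nat.card_eq_finsetCard,
    card_powersetCard]

theorem strictMono_finProdFinEquiv_right {a b : ℕ} (s : Fin a) :
    StrictMono fun i : Fin b => finProdFinEquiv (s, i) := fun i i' h => by
  rw [Fin.lt_def, finProdFinEquiv_apply_val, finProdFinEquiv_apply_val]
  exact Nat.add_lt_add_right h _

theorem StrictMono.val_add_le {N a : ℕ} {f : Fin N → ℕ} (hf : StrictMono f)
    (ha : ∀ i, a ≤ f i) (i : Fin N) : i + a ≤ f i := by
  obtain ⟨t, ht⟩ := i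
  induction t with
  | zero => simpa using ha _
  | succ t ih =>
    have hlt := hf (show (⟨t, by omega⟩ : Fin N) < ⟨t + 1, ht⟩ from Fin.mk_lt_mk.2 t.lt_succ_self)
    have := ih (by omega)
    simp only at this ⊢
    omega

theorem apply_finProdFinEquiv_mem_Icc {m n L : ℕ} {j : Fin ((L + 1) * m) → ℕ} (hj : StrictMono j)
    (hpos : ∀ i, 1 ≤ j i) (hle : ∀ i, j i ≤ (L + 1) * n)
    (hblock : ∀ s : ℕ, 1 ≤ s → s ≤ L → ∀ h : s * m - 1 < (L + 1) * m, j ⟨s * m - 1, h⟩ ≤ s * n)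
    (s : Fin (L + 1)) (i : Fin m) :
    j (finProdFinEquiv (s, i)) ∈ Icc (s * m + 1) ((s + 1) * n) := by
  have hi := i.2
  have hs := s.2
  have hsm : (s + 1 : ℕ) * m = s * m + m := Nat.succ_mul _ _
  have hLm : (L + 1) * m = L * m + m := Nat.succ_mul _ _
  have hmono : s * m ≤ L * m := Nat.mul_le_mul_right _ (by omega)
  have hlast : (s + 1 : ℕ) * m - 1 < (L + 1) * m := by omega
  have hval : (finProdFinEquiv (s, i) : ℕ) = s * m + i := by
    simp [finProdFinEquiv_apply_val, Nat.mul_comm, Nat.add_comm]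
  have hbound : j ⟨(s + 1) * m - 1, hlast⟩ ≤ (s + 1) * n := by
    rcases Nat.lt_or_ge s L with hsL | hsL
    · exact hblock (s + 1) (by omega) (by omega) hlast
    · exact (hle _).trans (Nat.mul_le_mul_right _ (by omega))
  rw [mem_Icc]
  constructor
  · have := hj.val_add_le hpos (finProdFinEquiv (s, i))
    omega
  · have hidx : finProdFinEquiv (s, i) ≤ ⟨(s + 1) * m - 1, hlast⟩ := by
      change (finProdFinEquiv (s, i) : ℕ) ≤ (s + 1) * m - 1
      omega
    exact (hj.monotone hidx).trans hbound

theorem stmt6_general (n k L : ℕ) :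
    Nat.card {j : Fin ((L + 1) * (n - k)) → ℕ //
      StrictMono j ∧ (∀ i, 1 ≤ j i) ∧ (∀ i, j i ≤ (L + 1) * n) ∧
      ∀ s : ℕ, 1 ≤ s → s ≤ L → ∀ h : s * (n - k) - 1 < (L + 1) * (n - k),
        j ⟨s * (n - k) - 1, h⟩ ≤ s * n}
    ≤ ∏ s ∈ Finset.range (L + 1), Nat.choose (n + s * k) (n - k) := by
  let blocks (j : Fin ((L + 1) * (n - k)) → ℕ) (s : Fin (L + 1)) (i : Fin (n - k)) : ℕ :=
    j (finProdFinEquiv (s, i))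
  have hblocks : Function.Injective blocks := fun j j' h => funext fun t => by
    obtain ⟨⟨s, i⟩, rfl⟩ := finProdFinEquiv.surjective t
    exact congrFun (congrFun h s) i
  calc _ ≤ Nat.card (∀ s : Fin (L + 1), {g : Fin (n - k) → ℕ //
          StrictMono g ∧ ∀ i, g i ∈ Icc (s * (n - k) + 1) ((s + 1) * n)}) :=
        Nat.card_le_card_of_injective
          (fun j s => ⟨blocks j.1 s, j.2.1.comp (strictMono_finProdFinEquiv_right s),
            apply_finProdFinEquiv_mem_Icc j.2.1 j.2.2.1 j.2.2.2.1 j.2.2.2.2 s⟩)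
          fun j j' h => Subtype.ext (hblocks (funext fun s => congrArg Subtype.val (congrFun h s)))
    _ = ∏ s : Fin (L + 1), ((s + 1) * n + 1 - (s * (n - k) + 1)).choose (n - k) := by
        simp only [Nat.card_pi, Finset.natCard_strictMono_mem, Nat.card_Icc]
    _ ≤ ∏ s : Fin (L + 1), (n + s * k).choose (n - k) := by
        gcongr with s
        rw [Nat.mul_sub, Nat.succ_mul]
        omega
    _ = ∏ s ∈ range (L + 1), (n + s * k).choose (n - k) :=
        Fin.prod_univ_eq_prod_range (fun s => (n + s * k).choose (n - k)) _

/-- Let n > k ≥ 1 and L ≥ 0. The number of strictly increasing integer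
sequences 1 ≤ j_1 < ⋯ < j_{(L+1)(n−k)} ≤ (L+1)·n with j_{s(n−k)} ≤ s·n for s = 1,…,L
is at most ∏_{s=0}^{L} C(n + s·k, n−k). (Sequences are modelled as strictly monotone
functions j : Fin ((L+1)(n−k)) → ℕ, where `j ⟨i-1, _⟩` is the i-th term j_i.) -/
theorem stmt6 (n k L : ℕ) (hk : 1 ≤ k) (hkn : k < n) :
    Nat.card {j : Fin ((L + 1) * (n - k)) → ℕ //
      StrictMono j ∧ (∀ i, 1 ≤ j i) ∧ (∀ i, j i ≤ (L + 1) * n) ∧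
      ∀ s : ℕ, 1 ≤ s → s ≤ L → ∀ h : s * (n - k) - 1 < (L + 1) * (n - k),
        j ⟨s * (n - k) - 1, h⟩ ≤ s * n}
    ≤ ∏ s ∈ Finset.range (L + 1), Nat.choose (n + s * k) (n - k) :=
  stmt6_general n k L
end

section
/- Let n > k ≥ 1 and L ≥ 1 be integers. The number of strictly increasing integer sequences 1 ≤ j_1 < j_2 < ⋯ < j_{(L+1)(n−k)} ≤ (L+1)·n satisfying j_{s(n−k)} ≤ s·n for all s = 1, …, L is at most ∑_{i=n−k}^{n} C(i−1, n−k−1) · ∏_{s=1}^{L} C(2n + (s−1)k − i, n−k), where C(a,b) denotes the binomial coefficient. -/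
/-!
A sequence is determined by its pivot value `i = j_m`, the set `{j_1, …, j_{m-1}} ⊆ [1, i - 1]`
and, for `s = 1, …, L`, the set of its `s`-th block `{j_{sm+1}, …, j_{(s+1)m}}`. Since the
sequence grows by at least one per step, this block lies in `[i + (s-1)m + 1, (s+1)n]`, the upper
end coming from `j_{(s+1)m} ≤ (s+1)n` (for `s = L`, from the bound `(L+1)n` on all terms).
Choosing the pivot and then these sets independently gives the bound, with `m = n - k`.
-/

open Finset

def Fin.positions (d a b : ℕ) : Finset (Fin d) := {t | (t : ℕ) ∈ Ico a b}

@[simp]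
lemma Fin.mem_positions {d a b : ℕ} {t : Fin d} : t ∈ Fin.positions d a b ↔ a ≤ t ∧ t < b := by
  simp [Fin.positions]

lemma Fin.card_positions {d a b : ℕ} (h : b ≤ d) : #(Fin.positions d a b) = b - a := by
  rw [← Nat.card_Ico, ← card_map Fin.valEmbedding]
  congr 1
  ext x
  simp only [mem_map, mem_positions, valEmbedding_apply, mem_Ico]
  exact ⟨fun ⟨t, ht, hx⟩ => hx ▸ ht, fun hx => ⟨⟨x, by omega⟩, hx, rfl⟩⟩

lemma StrictMono.apply_add_le_of_le {d : ℕ} {f : Fin d → ℕ} (hf : StrictMono f) {a b : Fin d}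
    (hab : a ≤ b) : f a + (b - a : ℕ) ≤ f b := by
  have hsub : (Icc a b).image f ⊆ Icc (f a) (f b) := fun x hx => by
    obtain ⟨t, ht, rfl⟩ := mem_image.mp hx
    exact mem_Icc.mpr ⟨hf.monotone (mem_Icc.mp ht).1, hf.monotone (mem_Icc.mp ht).2⟩
  have := card_le_card hsub
  rw [card_image_of_injective _ hf.injective, Fin.card_Icc, Nat.card_Icc] at this
  have : (a : ℕ) ≤ b := hab
  omega

-- `m` stands for `n - k`, and `j ⟨i - 1, _⟩` is the paper's `j_i`.
def IsMinorColumnSeq (m n L : ℕ) (j : Fin ((L + 1) * m) → ℕ) : Prop :=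
  StrictMono j ∧ (∀ i, 1 ≤ j i) ∧ (∀ i, j i ≤ (L + 1) * n) ∧
    ∀ s : ℕ, 1 ≤ s → s ≤ L → ∀ h : s * m - 1 < (L + 1) * m, j ⟨s * m - 1, h⟩ ≤ s * n

namespace IsMinorColumnSeq

variable {m n L : ℕ}

def pivot (hm : 0 < m) : Fin ((L + 1) * m) :=
  ⟨m - 1, lt_of_lt_of_le (Nat.sub_lt hm one_pos) (Nat.le_mul_of_pos_left m L.succ_pos)⟩

@[simp]
lemma val_pivot (hm : 0 < m) : (pivot (L := L) hm : ℕ) = m - 1 := rfl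

def encode (hm : 0 < m) (j : Fin ((L + 1) * m) → ℕ) :
    (_ : ℕ) × Finset ℕ × ((s : ℕ) → s ∈ Icc 1 L → Finset ℕ) :=
  ⟨j (pivot hm), (Fin.positions _ 0 (m - 1)).image j,
    fun s _ => (Fin.positions _ (s * m) ((s + 1) * m)).image j⟩

def codes (m n L : ℕ) : Finset ((_ : ℕ) × Finset ℕ × ((s : ℕ) → s ∈ Icc 1 L → Finset ℕ)) :=
  (Icc m n).sigma fun i => (Icc 1 (i - 1)).powersetCard (m - 1) ×ˢ
    (Icc 1 L).pi fun s => (Icc (i + (s - 1) * m + 1) ((s + 1) * n)).powersetCard m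

lemma card_codes : #(codes m n L) = ∑ i ∈ Icc m n, (i - 1).choose (m - 1) *
    ∏ s ∈ Icc 1 L, ((s + 1) * n - (i + (s - 1) * m)).choose m := by
  simp only [codes, card_sigma, card_product, card_pi, card_powersetCard, Nat.card_Icc,
    Nat.add_sub_cancel, Nat.add_sub_add_right]

variable {j : Fin ((L + 1) * m) → ℕ}

lemma apply_le_mul (hj : IsMinorColumnSeq m n L j) {s : ℕ} (hs : 1 ≤ s) (hsL : s ≤ L + 1)
    (h : s * m - 1 < (L + 1) * m) : j ⟨s * m - 1, h⟩ ≤ s * n := by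
  rcases hsL.lt_or_eq with hsL | rfl
  · exact hj.2.2.2 s hs (by omega) h
  · exact hj.2.2.1 _

lemma le_apply (hj : IsMinorColumnSeq m n L j) (t : Fin ((L + 1) * m)) : (t : ℕ) + 1 ≤ j t := by
  have hgap := hj.1.apply_add_le_of_le (a := ⟨0, t.pos⟩) (b := t) (Nat.zero_le _)
  have := hj.2.1 ⟨0, t.pos⟩
  rw [Fin.val_mk, Nat.sub_zero] at hgap
  omega

lemma apply_pivot_mem_Icc (hm : 0 < m) (hj : IsMinorColumnSeq m n L j) :
    j (pivot hm) ∈ Icc m n := by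
  have h : 1 * m - 1 < (L + 1) * m := by rw [one_mul]; exact (pivot hm).isLt
  have hpivot : pivot hm = ⟨1 * m - 1, h⟩ := Fin.ext (by simp [pivot])
  refine mem_Icc.mpr ⟨?_, ?_⟩
  · have := hj.le_apply (pivot hm)
    rw [val_pivot] at this
    omega
  · simpa [hpivot] using hj.apply_le_mul le_rfl (by omega) h

lemma image_head_subset (hm : 0 < m) (hj : IsMinorColumnSeq m n L j) :
    (Fin.positions _ 0 (m - 1)).image j ⊆ Icc 1 (j (pivot hm) - 1) := by
  intro x hx
  obtain ⟨t, ht, rfl⟩ := mem_image.mp hx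
  have hlt : j t < j (pivot hm) := hj.1 (Fin.mk_lt_mk.mpr (Fin.mem_positions.mp ht).2)
  have := hj.2.1 t
  exact mem_Icc.mpr ⟨this, by omega⟩

lemma image_block_subset (hm : 0 < m) (hj : IsMinorColumnSeq m n L j) {s : ℕ}
    (hs : s ∈ Icc 1 L) : (Fin.positions _ (s * m) ((s + 1) * m)).image j ⊆
      Icc (j (pivot hm) + (s - 1) * m + 1) ((s + 1) * n) := by
  intro x hx
  obtain ⟨t, ht, rfl⟩ := mem_image.mp hx
  obtain ⟨hts, hts'⟩ := Fin.mem_positions.mp ht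
  obtain ⟨s, rfl⟩ : ∃ s', s = s' + 1 := ⟨s - 1, by grind⟩
  have hsm : (s + 1) * m = s * m + m := by ring
  have hlow := hj.1.apply_add_le_of_le (a := pivot hm) (b := t)
    (by rw [Fin.le_def, val_pivot]; omega)
  have hidx : (s + 1 + 1) * m - 1 < (L + 1) * m := by
    have := Nat.mul_le_mul_right m (show s + 1 + 1 ≤ L + 1 by grind)
    omega
  have hup := hj.1.monotone (a := t) (b := ⟨_, hidx⟩) (by simp [Fin.le_def]; omega)
  have := hj.apply_le_mul (s := s + 1 + 1) (by omega) (by grind) hidx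
  rw [val_pivot] at hlow
  rw [mem_Icc, Nat.add_sub_cancel]
  constructor
  · omega
  · omega

lemma encode_mem_codes (hm : 0 < m) (hj : IsMinorColumnSeq m n L j) :
    encode hm j ∈ codes m n L := by
  simp only [encode, codes, mem_sigma, mem_product, mem_pi, mem_powersetCard,
    card_image_of_injective _ hj.1.injective]
  refine ⟨hj.apply_pivot_mem_Icc hm, ⟨hj.image_head_subset hm, ?_⟩,
    fun s hs => ⟨hj.image_block_subset hm hs, ?_⟩⟩
  · rw [Fin.card_positions ((Nat.sub_le m 1).trans (Nat.le_mul_of_pos_left m L.succ_pos))]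
    simp
  · rw [Fin.card_positions (Nat.mul_le_mul_right m (by grind)), add_mul, one_mul,
      Nat.add_sub_cancel_left]

lemma univ_eq_union (hm : 0 < m) : (univ : Finset (Fin ((L + 1) * m))) =
    Fin.positions _ 0 (m - 1) ∪ {pivot hm} ∪
      (Icc 1 L).biUnion fun s => Fin.positions _ (s * m) ((s + 1) * m) := by
  ext t
  simp only [mem_univ, true_iff, mem_union, mem_singleton, mem_biUnion, Fin.mem_positions,
    mem_Icc, Fin.ext_iff, val_pivot]
  by_cases ht : (t : ℕ) < m
  · omega
  · have hdiv : t / m < L + 1 := (Nat.div_lt_iff_lt_mul hm).mpr t.isLt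
    exact Or.inr ⟨t / m, ⟨(Nat.one_le_div_iff hm).mpr (by omega), by omega⟩,
      Nat.div_mul_le_self _ _, (Nat.div_lt_iff_lt_mul hm).mp (Nat.lt_succ_self _)⟩

lemma encode_injOn (hm : 0 < m) : Set.InjOn (encode (L := L) hm) {j | StrictMono j} := by
  intro j hj j' hj' h
  simp only [encode, Sigma.mk.injEq, heq_eq_eq, Prod.mk.injEq] at h
  obtain ⟨hpivot, hhead, hblocks⟩ := h
  have himage : univ.image j = univ.image j' := by
    simp only [univ_eq_union hm, image_union, biUnion_image, image_singleton, hpivot, hhead]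
    exact congr_arg _ (biUnion_congr rfl fun s hs => congr_fun (congr_fun hblocks s) hs)
  rw [← hj.range_inj hj', ← Set.image_univ, ← Set.image_univ, ← coe_univ, ← coe_image,
    ← coe_image, himage]

theorem card_le_sum (hm : 0 < m) : Nat.card {j // IsMinorColumnSeq m n L j} ≤
    ∑ i ∈ Icc m n, (i - 1).choose (m - 1) *
      ∏ s ∈ Icc 1 L, ((s + 1) * n - (i + (s - 1) * m)).choose m := by
  rw [← card_codes, ← Set.ncard_coe_finset]
  exact Set.ncard_le_ncard_of_injOn (s := {j | IsMinorColumnSeq m n L j}) (encode hm)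
    (fun _ hj => encode_mem_codes hm hj) ((encode_injOn hm).mono fun _ hj => hj.1)

end IsMinorColumnSeq

theorem stmt7_general (n k L : ℕ) (hkn : k < n) :
    Nat.card {j : Fin ((L + 1) * (n - k)) → ℕ //
      StrictMono j ∧ (∀ i, 1 ≤ j i) ∧ (∀ i, j i ≤ (L + 1) * n) ∧
      ∀ s : ℕ, 1 ≤ s → s ≤ L → ∀ h : s * (n - k) - 1 < (L + 1) * (n - k),
        j ⟨s * (n - k) - 1, h⟩ ≤ s * n}
    ≤ ∑ i ∈ Finset.Icc (n - k) n, Nat.choose (i - 1) (n - k - 1) *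
        ∏ s ∈ Finset.Icc 1 L, Nat.choose (2 * n + (s - 1) * k - i) (n - k) := by
  refine (IsMinorColumnSeq.card_le_sum (n := n) (L := L) (Nat.sub_pos_of_lt hkn)).trans_eq
    (sum_congr rfl fun _ _ => congr_arg _ (prod_congr rfl fun s hs => ?_))
  obtain ⟨s, rfl⟩ : ∃ s', s = s' + 1 := ⟨s - 1, by grind⟩
  have hsplit : s * (n - k) + s * k = s * n := by rw [← mul_add, Nat.sub_add_cancel hkn.le]
  have hexpand : (s + 1 + 1) * n = s * n + 2 * n := by ring
  rw [Nat.add_sub_cancel, hexpand]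
  grind

/-- Let n > k ≥ 1 and L ≥ 1. The number of strictly increasing integer
sequences 1 ≤ j_1 < ⋯ < j_{(L+1)(n−k)} ≤ (L+1)·n with j_{s(n−k)} ≤ s·n for s = 1,…,L
is at most ∑_{i=n−k}^{n} C(i−1, n−k−1) · ∏_{s=1}^{L} C(2n + (s−1)k − i, n−k).
(Sequences are modelled as strictly monotone functions j : Fin ((L+1)(n−k)) → ℕ,
where `j ⟨i-1, _⟩` is the i-th term j_i.) -/
theorem stmt7 (n k L : ℕ) (hk : 1 ≤ k) (hkn : k < n) (hL : 1 ≤ L) :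
    Nat.card {j : Fin ((L + 1) * (n - k)) → ℕ //
      StrictMono j ∧ (∀ i, 1 ≤ j i) ∧ (∀ i, j i ≤ (L + 1) * n) ∧
      ∀ s : ℕ, 1 ≤ s → s ≤ L → ∀ h : s * (n - k) - 1 < (L + 1) * (n - k),
        j ⟨s * (n - k) - 1, h⟩ ≤ s * n}
    ≤ ∑ i ∈ Finset.Icc (n - k) n, Nat.choose (i - 1) (n - k - 1) *
        ∏ s ∈ Finset.Icc 1 L, Nat.choose (2 * n + (s - 1) * k - i) (n - k) :=
  stmt7_general n k L hkn
end

section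
/- Let n > k ≥ 1 and δ ≥ 1 be integers with (n−k) ∣ δ, set ν := δ/(n−k) and L := δ/(n−k) + ⌊δ/k⌋, and let F be a finite field. Set N1 := (L+1)(n−k)·C((L+1+δ/(n−k))·n, (L+1)(n−k)) and N2 := (L+1)(n−k)·(δn/(n−k) + k + 1)^{(n−k)(L+1)}. If |F| > min{N1, N2}, then there exist matrices H_0, …, H_ν ∈ F^{(n−k)×n} such that, with 𝔥 the (L+1)(n−k) × (ν+L+1)n block matrix whose (r,c) block (0 ≤ r ≤ L, 0 ≤ c ≤ ν+L) equals H_{ν−(c−r)} if 0 ≤ c−r ≤ ν and the zero matrix otherwise, every full-size minor of 𝔥 formed by columns j_1 < ⋯ < j_{(L+1)(n−k)} satisfying j_{(n−k)s+1} > sn and j_{(n−k)s} ≤ (s+ν)n for s = 1, …, L is nonzero. -/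
/-- The partial parity-check matrix
𝔥 = [[H_ν, …, H_0, 0, …, 0], [0, H_ν, …, H_0, …, 0], …, [0, …, 0, H_ν, …, H_0]]
of size (L+1)(n−k) × (ν+L+1)n built from H_0, …, H_ν ∈ F^{(n−k)×n}: its (r,c) block
(with block row r / (n−k) and block column c / n) is H_{ν−(c/n − r/(n−k))} when
0 ≤ c/n − r/(n−k) ≤ ν, and zero otherwise. -/
def partialPCMatrix {F : Type*} [Field F] (n k ν L : ℕ)
    (H : Fin (ν + 1) → Matrix (Fin (n - k)) (Fin n) F) :
    Matrix (Fin ((L + 1) * (n - k))) (Fin ((ν + L + 1) * n)) F :=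
  Matrix.of fun r c =>
    if h : r.val / (n - k) ≤ c.val / n ∧ c.val / n - r.val / (n - k) ≤ ν ∧
        r.val % (n - k) < n - k ∧ c.val % n < n then
      H ⟨ν - (c.val / n - r.val / (n - k)), Nat.lt_succ_of_le (Nat.sub_le _ _)⟩
        ⟨r.val % (n - k), h.2.2.1⟩ ⟨c.val % n, h.2.2.2⟩
    else 0

open MvPolynomial Finset

section Aux

variable {F : Type*} [Field F]

/-- product of monomials with coefficient 1 -/
lemma aux_prod_monomial {V ι : Type*} (s : Finset ι) (g : ι → (V →₀ ℕ)) :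
    (∏ i ∈ s, (monomial (g i) (1 : F))) = monomial (∑ i ∈ s, g i) 1 := by
  induction s using Finset.cons_induction with
  | empty => simp [monomial_zero']
  | cons a s ha ih =>
      rw [Finset.prod_cons, ih, Finset.sum_cons, monomial_mul, one_mul]

lemma aux_sum_singleton_map {ι V : Type*} (s : Finset ι) (f : ι → V) :
    (∑ i ∈ s, ({f i} : Multiset V)) = s.val.map f := by
  induction s using Finset.cons_induction with
  | empty => simp
  | cons a s ha ih => simp [Finset.sum_cons, ih]

lemma aux_sum_single_eq {ι V : Type*} [Fintype ι] {u v : ι → V}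
    (h : (∑ i, Finsupp.single (u i) (1 : ℕ)) = ∑ i, Finsupp.single (v i) 1)
    (g : V → ℤ) : ∑ i, g (u i) = ∑ i, g (v i) := by
  have hm : Multiset.map u Finset.univ.val = Multiset.map v Finset.univ.val := by
    have h2 := congrArg Finsupp.toMultiset h
    rw [Finsupp.toMultiset_sum, Finsupp.toMultiset_sum] at h2
    simp only [Finsupp.toMultiset_single, one_nsmul] at h2
    rwa [aux_sum_singleton_map, aux_sum_singleton_map] at h2
  have h3 := congrArg (fun m : Multiset V => (m.map g).sum) hm
  simp only [Multiset.map_map] at h3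
  rw [Finset.sum_eq_multiset_sum, Finset.sum_eq_multiset_sum]
  exact h3

/-- strictly monotone maps into Fin grow at least linearly -/
lemma aux_strictMono_add {D M : ℕ} {c : Fin D → Fin M} (hc : StrictMono c) :
    ∀ (t : ℕ) (i j : Fin D), i.val + t = j.val → (c i).val + t ≤ (c j).val := by
  intro t
  induction t with
  | zero => intro i j h; have : i = j := Fin.ext (by omega); simp [this]
  | succ t ih =>
      intro i j h
      have hj' : i.val + t < D := by omega
      have h1 := ih i ⟨i.val + t, hj'⟩ rfl
      have h2 : (⟨i.val + t, hj'⟩ : Fin D) < j := by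
        rw [Fin.lt_def]; simp; omega
      have := hc h2
      rw [Fin.lt_def] at this
      omega

/-- ψ is strictly monotone -/
lemma aux_psi_strictMono {n nk : ℕ} (hnk0 : 0 < nk) (hnkn : nk ≤ n) :
    ∀ r r' : ℕ, r < r' → n * (r / nk) + r % nk < n * (r' / nk) + r' % nk := by
  intro r r' h
  obtain ⟨q, s, hs, rfl⟩ : ∃ q s, s < nk ∧ r = nk * q + s :=
    ⟨r / nk, r % nk, Nat.mod_lt _ hnk0, (Nat.div_add_mod r nk).symm⟩
  obtain ⟨q', s', hs', rfl⟩ : ∃ q' s', s' < nk ∧ r' = nk * q' + s' :=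
    ⟨r' / nk, r' % nk, Nat.mod_lt _ hnk0, (Nat.div_add_mod r' nk).symm⟩
  have e1 : (nk * q + s) / nk = q := by
    rw [Nat.mul_add_div hnk0, Nat.div_eq_of_lt hs, add_zero]
  have e2 : (nk * q' + s') / nk = q' := by
    rw [Nat.mul_add_div hnk0, Nat.div_eq_of_lt hs', add_zero]
  have e3 : (nk * q + s) % nk = s := by rw [Nat.mul_add_mod, Nat.mod_eq_of_lt hs]
  have e4 : (nk * q' + s') % nk = s' := by rw [Nat.mul_add_mod, Nat.mod_eq_of_lt hs']
  rw [e1, e2, e3, e4]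
  rcases lt_trichotomy q q' with hd | hd | hd
  · have h5 : q + 1 ≤ q' := hd
    have : n * (q + 1) ≤ n * q' := Nat.mul_le_mul_left n h5
    nlinarith
  · subst hd; omega
  · exfalso
    have h5 : q' + 1 ≤ q := hd
    have : nk * (q' + 1) ≤ nk * q := Nat.mul_le_mul_left nk h5
    nlinarith

/-- the rearrangement step: equal second moments of differences forces σ = 1 -/
lemma aux_perm_eq_one {D : ℕ} (w p : Fin D → ℤ) (hw : StrictMono w) (hp : StrictMono p)
    (σ : Equiv.Perm (Fin D))
    (h2 : ∑ i, (w i - p (σ i)) ^ 2 = ∑ i, (w i - p i) ^ 2) : σ = 1 := by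
  have hps : ∑ i, (p (σ i)) ^ 2 = ∑ i, (p i) ^ 2 := Equiv.sum_comp σ (fun i => (p i) ^ 2)
  have hcross : ∑ i, p (σ i) * w i = ∑ i, p i * w i := by
    have e1 : ∀ i : Fin D, (w i - p (σ i)) ^ 2
        = w i ^ 2 + (p (σ i)) ^ 2 - 2 * (p (σ i) * w i) := by intro i; ring
    have e2 : ∀ i : Fin D, (w i - p i) ^ 2
        = w i ^ 2 + (p i) ^ 2 - 2 * (p i * w i) := by intro i; ring
    rw [Finset.sum_congr rfl (fun i _ => e1 i), Finset.sum_congr rfl (fun i _ => e2 i)] at h2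
    rw [Finset.sum_sub_distrib, Finset.sum_sub_distrib, Finset.sum_add_distrib,
      Finset.sum_add_distrib, ← Finset.mul_sum, ← Finset.mul_sum, hps] at h2
    omega
  have hmono : Monovary p w := by
    intro i j hij
    have : i < j := hw.lt_iff_lt.mp hij
    exact (hp.le_iff_le.mpr this.le)
  have hiff := hmono.sum_comp_perm_smul_eq_sum_smul_iff (σ := σ)
  simp only [smul_eq_mul] at hiff
  have hmv : Monovary (p ∘ σ) w := hiff.mp hcross
  have hsm : StrictMono σ := by
    intro i j hij
    have hw' : w i < w j := hw hij
    have h1 : p (σ i) ≤ p (σ j) := hmv hw'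
    have hne : σ i ≠ σ j := fun h => (ne_of_lt hij) (σ.injective h)
    rcases lt_or_gt_of_ne hne with h | h
    · exact h
    · exact absurd (hp h) (not_lt.mpr h1)
  have hsm' : StrictMono (⇑σ⁻¹ : Fin D → Fin D) := by
    intro i j hij
    rcases lt_trichotomy (σ⁻¹ i) (σ⁻¹ j) with h | h | h
    · exact h
    · exact absurd ((σ⁻¹).injective h) (ne_of_lt hij)
    · exfalso
      have h4 := hsm h
      simp only [Equiv.Perm.inv_def, Equiv.apply_symm_apply] at h4
      exact absurd hij (not_lt.mpr h4.le)
  have inst : WellFoundedLT (Fin D) := inferInstance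
  apply Equiv.ext
  intro i
  have h1 : i ≤ σ i := @StrictMono.le_apply (Fin D) _ inst _ hsm i
  have h2 : i ≤ σ⁻¹ i := @StrictMono.le_apply (Fin D) _ inst _ hsm' i
  have h3 : σ i ≤ σ (σ⁻¹ i) := hsm.le_iff_le.mpr h2
  simp only [Equiv.Perm.inv_def, Equiv.apply_symm_apply] at h3
  simp only [Equiv.Perm.one_apply]
  exact le_antisymm h3 h1

end Aux

open MvPolynomial Finset

lemma aux_sz_fin (F : Type*) [Field F] [Fintype F] [DecidableEq F] :
    ∀ (m : ℕ) (p : MvPolynomial (Fin m) F), p ≠ 0 → p.totalDegree < Fintype.card F →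
      ∃ x : Fin m → F, (eval x) p ≠ 0 := by
  intro m
  induction m with
  | zero =>
      intro p hp _
      refine ⟨fun i => 0, ?_⟩
      rw [eq_C_of_isEmpty p, eval_C]
      intro h
      apply hp
      rw [eq_C_of_isEmpty p, h, map_zero]
  | succ m ih =>
      intro p hp hdeg
      set q := finSuccEquiv F m p with hq
      have hq0 : q ≠ 0 := by
        intro h
        apply hp
        have h2 : finSuccEquiv F m p = finSuccEquiv F m 0 := by
          rw [map_zero, ← hq, h]
        exact (finSuccEquiv F m).injective h2
      set d := q.natDegree with hd
      have hlead : q.coeff d ≠ 0 := by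
        rw [hd]
        exact Polynomial.leadingCoeff_ne_zero.mpr hq0
      have hdle : (q.coeff d).totalDegree + d ≤ p.totalDegree :=
        totalDegree_coeff_finSuccEquiv_add_le p d hlead
      obtain ⟨x', hx'⟩ := ih (q.coeff d) hlead (by omega)
      set r := q.map (eval x') with hr
      have hrd : r.coeff d ≠ 0 := by
        rw [hr, Polynomial.coeff_map]; exact hx'
      have hr0 : r ≠ 0 := fun h => hrd (by rw [h, Polynomial.coeff_zero])
      have hroots : r.roots.toFinset.card < Fintype.card F := by
        calc r.roots.toFinset.card ≤ Multiset.card r.roots := Multiset.toFinset_card_le _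
          _ ≤ r.natDegree := Polynomial.card_roots' r
          _ ≤ q.natDegree := Polynomial.natDegree_map_le
          _ ≤ p.totalDegree := by omega
          _ < Fintype.card F := hdeg
      obtain ⟨y, hy⟩ : ∃ y : F, y ∉ r.roots.toFinset := by
        by_contra hcon
        push_neg at hcon
        have : (Finset.univ : Finset F) ⊆ r.roots.toFinset := fun y _ => hcon y
        have := Finset.card_le_card this
        rw [Finset.card_univ] at this
        omega
      refine ⟨Fin.cons y x', ?_⟩
      rw [eval_eq_eval_mv_eval']
      intro h
      apply hy
      rw [Multiset.mem_toFinset, Polynomial.mem_roots hr0]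
      exact h

lemma aux_sz {V : Type*} [Fintype V] (F : Type*) [Field F] [Fintype F]
    (p : MvPolynomial V F) (hp : p ≠ 0) (hdeg : p.totalDegree < Fintype.card F) :
    ∃ x : V → F, (eval x) p ≠ 0 := by
  classical
  haveI : DecidableEq F := Classical.decEq F
  set e := Fintype.equivFin V with he
  have hre : rename e p ≠ 0 := fun h =>
    hp ((rename_injective e e.injective) (by rw [h, map_zero]))
  have hdr : (rename e p).totalDegree < Fintype.card F :=
    lt_of_le_of_lt (totalDegree_rename_le e p) hdeg
  obtain ⟨x, hx⟩ := aux_sz_fin F _ (rename e p) hre hdr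
  refine ⟨x ∘ e, ?_⟩
  rwa [← eval_rename]
section MinorLemmas

open MvPolynomial Finset

/-- generic partial parity-check matrix with indeterminate entries -/
noncomputable def genPC (n k ν L : ℕ) (F : Type*) [Field F] :
    Matrix (Fin ((L + 1) * (n - k))) (Fin ((ν + L + 1) * n))
      (MvPolynomial (Fin (ν + 1) × Fin (n - k) × Fin n) F) :=
  Matrix.of fun r c =>
    if h : r.val / (n - k) ≤ c.val / n ∧ c.val / n - r.val / (n - k) ≤ ν ∧
        r.val % (n - k) < n - k ∧ c.val % n < n then
      X (⟨ν - (c.val / n - r.val / (n - k)), Nat.lt_succ_of_le (Nat.sub_le _ _)⟩,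
        ⟨r.val % (n - k), h.2.2.1⟩, ⟨c.val % n, h.2.2.2⟩)
    else 0

lemma aux_map_genPC (n k ν L : ℕ) (F : Type*) [Field F]
    (x : Fin (ν + 1) × Fin (n - k) × Fin n → F) :
    (genPC n k ν L F).map (eval x)
      = partialPCMatrix n k ν L (fun m => Matrix.of fun a e => x (m, a, e)) := by
  ext r c
  simp only [Matrix.map_apply, genPC, partialPCMatrix, Matrix.of_apply]
  rw [apply_dite (eval x)]
  split
  · exact eval_X _
  · exact map_zero _

lemma aux_minor_deg (n k ν L : ℕ) (F : Type*) [Field F]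
    (c : Fin ((L + 1) * (n - k)) → Fin ((ν + L + 1) * n)) :
    ((genPC n k ν L F).submatrix id c).det.totalDegree ≤ (L + 1) * (n - k) := by
  classical
  rw [Matrix.det_apply]
  refine totalDegree_finsetSum_le ?_
  intro σ _
  refine (totalDegree_smul_le _ _).trans ?_
  refine (totalDegree_finset_prod _ _).trans ?_
  have hb : ∀ i : Fin ((L + 1) * (n - k)),
      ((genPC n k ν L F).submatrix id c (σ i) i).totalDegree ≤ 1 := by
    intro i
    simp only [Matrix.submatrix_apply, id_eq, genPC, Matrix.of_apply]
    split
    · exact le_of_eq (totalDegree_X _)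
    · simp
  calc ∑ i, ((genPC n k ν L F).submatrix id c (σ i) i).totalDegree
      ≤ ∑ _i : Fin ((L + 1) * (n - k)), 1 := Finset.sum_le_sum (fun i _ => hb i)
    _ = (L + 1) * (n - k) := by simp

lemma aux_minor_ne_zero (n k ν L : ℕ) (hk : 1 ≤ k) (hkn : k < n) (F : Type*) [Field F]
    (c : Fin ((L + 1) * (n - k)) → Fin ((ν + L + 1) * n)) (hc : StrictMono c)
    (hband : ∀ i : Fin ((L + 1) * (n - k)),
      i.val / (n - k) ≤ (c i).val / n ∧ (c i).val / n ≤ i.val / (n - k) + ν) :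
    ((genPC n k ν L F).submatrix id c).det ≠ 0 := by
  classical
  have hnk0 : 0 < n - k := by omega
  have hn0 : 0 < n := by omega
  let V := Fin (ν + 1) × Fin (n - k) × Fin n
  let vv : Fin ((L + 1) * (n - k)) → Fin ((ν + L + 1) * n) → V := fun i j =>
    (⟨ν - (j.val / n - i.val / (n - k)), Nat.lt_succ_of_le (Nat.sub_le _ _)⟩,
     ⟨i.val % (n - k), Nat.mod_lt _ hnk0⟩, ⟨j.val % n, Nat.mod_lt _ hn0⟩)
  set Mx := (genPC n k ν L F).submatrix id c with hMxdef
  have hMx : ∀ i j : Fin ((L + 1) * (n - k)),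
      Mx i j = if i.val / (n - k) ≤ (c j).val / n ∧ (c j).val / n - i.val / (n - k) ≤ ν
        then X (vv i (c j)) else 0 := by
    intro i j
    by_cases h : i.val / (n - k) ≤ (c j).val / n ∧ (c j).val / n - i.val / (n - k) ≤ ν
    · rw [if_pos h]
      simp only [hMxdef, Matrix.submatrix_apply, id_eq, genPC, Matrix.of_apply]
      rw [dif_pos ⟨h.1, h.2, Nat.mod_lt _ hnk0, Nat.mod_lt _ hn0⟩]
    · rw [if_neg h]
      simp only [hMxdef, Matrix.submatrix_apply, id_eq, genPC, Matrix.of_apply]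
      rw [dif_neg]
      intro hcon
      exact h ⟨hcon.1, hcon.2.1⟩
  have hband' : ∀ i : Fin ((L + 1) * (n - k)),
      i.val / (n - k) ≤ (c i).val / n ∧ (c i).val / n - i.val / (n - k) ≤ ν := by
    intro i; obtain ⟨h1, h2⟩ := hband i; exact ⟨h1, by omega⟩
  let ψ : Fin ((L + 1) * (n - k)) → ℤ :=
    fun i => ((n * (i.val / (n - k)) + i.val % (n - k) : ℕ) : ℤ)
  let fz : V → ℤ := fun v =>
    (n : ℤ) * ((ν - v.1.val : ℕ) : ℤ) + (v.2.2.val : ℤ) - (v.2.1.val : ℤ)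
  have hkey : ∀ (i : Fin ((L + 1) * (n - k))) (j : Fin ((ν + L + 1) * n)),
      i.val / (n - k) ≤ j.val / n → j.val / n - i.val / (n - k) ≤ ν →
      fz (vv i j) = (j.val : ℤ) - ψ i := by
    intro i j h1 h2
    show (n : ℤ) * ((ν - (ν - (j.val / n - i.val / (n - k))) : ℕ) : ℤ)
        + ((j.val % n : ℕ) : ℤ) - ((i.val % (n - k) : ℕ) : ℤ)
      = (j.val : ℤ) - ((n * (i.val / (n - k)) + i.val % (n - k) : ℕ) : ℤ)
    rw [Nat.sub_sub_self h2]
    have hj' : (j.val : ℤ) = (n : ℤ) * ((j.val / n : ℕ) : ℤ) + ((j.val % n : ℕ) : ℤ) := by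
      exact_mod_cast (Nat.div_add_mod j.val n).symm
    rw [hj']
    push_cast [Nat.cast_sub h1]
    ring
  have hψmono : StrictMono ψ := by
    intro i j hij
    show ((n * (i.val / (n - k)) + i.val % (n - k) : ℕ) : ℤ)
      < ((n * (j.val / (n - k)) + j.val % (n - k) : ℕ) : ℤ)
    exact_mod_cast aux_psi_strictMono hnk0 (by omega : n - k ≤ n) i.val j.val hij
  have hwmono : StrictMono (fun i : Fin ((L + 1) * (n - k)) => ((c i).val : ℤ)) := by
    intro i j hij
    show ((c i).val : ℤ) < ((c j).val : ℤ)
    exact_mod_cast hc hij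
  have hcoeff : coeff (∑ i : Fin ((L + 1) * (n - k)), Finsupp.single (vv i (c i)) 1)
      Mx.det = 1 := by
    rw [Matrix.det_apply, coeff_sum]
    have hterm : ∀ σ : Equiv.Perm (Fin ((L + 1) * (n - k))),
        coeff (∑ i : Fin ((L + 1) * (n - k)), Finsupp.single (vv i (c i)) 1)
          (Equiv.Perm.sign σ • ∏ i, Mx (σ i) i) = if σ = 1 then 1 else 0 := by
      intro σ
      by_cases hb : ∀ i : Fin ((L + 1) * (n - k)),
          (σ i).val / (n - k) ≤ (c i).val / n ∧ (c i).val / n - (σ i).val / (n - k) ≤ ν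
      · have hprod : (∏ i, Mx (σ i) i)
            = monomial (∑ i : Fin ((L + 1) * (n - k)),
                Finsupp.single (vv (σ i) (c i)) 1) 1 := by
          rw [← aux_prod_monomial]
          apply Finset.prod_congr rfl
          intro i _
          rw [hMx (σ i) i, if_pos (hb i)]
          rfl
        rw [hprod, coeff_smul, coeff_monomial]
        by_cases h1 : σ = 1
        · subst h1
          have hss : (∑ i : Fin ((L + 1) * (n - k)),
                Finsupp.single (vv ((1 : Equiv.Perm (Fin ((L + 1) * (n - k)))) i) (c i)) 1)
              = ∑ i : Fin ((L + 1) * (n - k)), Finsupp.single (vv i (c i)) 1 := by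
            simp
          rw [if_pos hss, if_pos rfl]
          simp
        · have hne : (∑ i : Fin ((L + 1) * (n - k)),
                Finsupp.single (vv (σ i) (c i)) 1)
              ≠ ∑ i : Fin ((L + 1) * (n - k)), Finsupp.single (vv i (c i)) 1 := by
            intro heq
            apply h1
            have hsum2 := aux_sum_single_eq heq (fun v => (fz v) ^ 2)
            have hl : ∀ i, fz (vv (σ i) (c i)) = ((c i).val : ℤ) - ψ (σ i) :=
              fun i => hkey (σ i) (c i) (hb i).1 (hb i).2
            have hr : ∀ i, fz (vv i (c i)) = ((c i).val : ℤ) - ψ i :=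
              fun i => hkey i (c i) (hband' i).1 (hband' i).2
            have hLs : (∑ i, (fz (vv (σ i) (c i))) ^ 2)
                = ∑ i : Fin ((L + 1) * (n - k)), (((c i).val : ℤ) - ψ (σ i)) ^ 2 :=
              Finset.sum_congr rfl (fun i _ => by rw [hl i])
            have hRs : (∑ i, (fz (vv i (c i))) ^ 2)
                = ∑ i : Fin ((L + 1) * (n - k)), (((c i).val : ℤ) - ψ i) ^ 2 :=
              Finset.sum_congr rfl (fun i _ => by rw [hr i])
            exact aux_perm_eq_one _ ψ hwmono hψmono σ (by rw [← hLs, ← hRs]; exact hsum2)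
          rw [if_neg hne, if_neg h1]
          simp
      · obtain ⟨i, hi⟩ := not_forall.mp hb
        have hzero : Mx (σ i) i = 0 := by rw [hMx (σ i) i, if_neg hi]
        have hz : (∏ i, Mx (σ i) i) = 0 := Finset.prod_eq_zero (Finset.mem_univ i) hzero
        have hσ : σ ≠ 1 := by
          intro h1; subst h1
          exact hi (by simpa using hband' i)
        rw [hz, smul_zero, if_neg hσ]
        simp
    rw [Finset.sum_congr rfl (fun σ _ => hterm σ),
      Finset.sum_ite_eq' Finset.univ (1 : Equiv.Perm (Fin ((L + 1) * (n - k))))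
        (fun _ => (1 : F))]
    simp
  intro h0
  rw [h0] at hcoeff
  simp at hcoeff

lemma aux_bounds (n k ν L : ℕ) (hk : 1 ≤ k) (hkn : k < n)
    (c : Fin ((L + 1) * (n - k)) → Fin ((ν + L + 1) * n)) (hc : StrictMono c)
    (hcon : ∀ s : ℕ, 1 ≤ s → s ≤ L →
      (∀ h : s * (n - k) < (L + 1) * (n - k),
        s * n < ((c ⟨s * (n - k), h⟩ : Fin ((ν + L + 1) * n)) : ℕ) + 1) ∧
      (∀ h : s * (n - k) - 1 < (L + 1) * (n - k),
        ((c ⟨s * (n - k) - 1, h⟩ : Fin ((ν + L + 1) * n)) : ℕ) + 1 ≤ (s + ν) * n)) :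
    ∀ i : Fin ((L + 1) * (n - k)),
      (i.val / (n - k)) * n + i.val % (n - k) ≤ (c i).val ∧
      (c i).val ≤ (i.val / (n - k)) * n + i.val % (n - k) + (ν * n + k) := by
  have hnk0 : 0 < n - k := by omega
  have hn0 : 0 < n := by omega
  have hD0 : 0 < (L + 1) * (n - k) := Nat.mul_pos (by omega) hnk0
  intro i
  obtain ⟨β, t, hβdef, htdef⟩ : ∃ β t, i.val / (n - k) = β ∧ i.val % (n - k) = t :=
    ⟨_, _, rfl, rfl⟩
  have hβt : (n - k) * β + t = i.val := by
    rw [← hβdef, ← htdef]; exact Nat.div_add_mod _ _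
  have htlt : t < n - k := by rw [← htdef]; exact Nat.mod_lt _ hnk0
  have hβL : β < L + 1 := by
    rw [← hβdef, Nat.div_lt_iff_lt_mul hnk0]; exact i.isLt
  have hcomm : β * (n - k) = (n - k) * β := Nat.mul_comm _ _
  rw [hβdef, htdef]
  constructor
  · -- lower bound
    by_cases hβ0 : β = 0
    · subst hβ0
      have hmono := aux_strictMono_add hc i.val ⟨0, hD0⟩ i (by simp)
      simp only [Nat.zero_mul, Nat.mul_zero] at hβt ⊢
      omega
    · have hlt : β * (n - k) < (L + 1) * (n - k) := by
        have h' : (β + 1) * (n - k) ≤ (L + 1) * (n - k) :=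
          Nat.mul_le_mul_right _ (by omega)
        have h'' : (β + 1) * (n - k) = β * (n - k) + (n - k) := by ring
        omega
      have h1 := (hcon β (by omega) (by omega)).1 hlt
      have h2 := aux_strictMono_add hc t ⟨β * (n - k), hlt⟩ i
        (by simp only [Fin.val_mk]; omega)
      omega
  · -- upper bound
    obtain ⟨u, hu⟩ : ∃ u, t + u + 1 = n - k := ⟨n - k - t - 1, by omega⟩
    by_cases hβL' : β < L
    · have hexp : (β + 1) * (n - k) = (n - k) * β + (n - k) := by ring
      have hpos : 0 < (β + 1) * (n - k) := Nat.mul_pos (by omega) hnk0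
      have hmle : (β + 1) * (n - k) ≤ (L + 1) * (n - k) :=
        Nat.mul_le_mul_right _ (by omega)
      have hidx : (β + 1) * (n - k) - 1 < (L + 1) * (n - k) := by omega
      have h2 := (hcon (β + 1) (by omega) (by omega)).2 hidx
      have hstep := aux_strictMono_add hc u i ⟨(β + 1) * (n - k) - 1, hidx⟩
        (by simp only [Fin.val_mk]; omega)
      have hexp2 : (β + 1 + ν) * n = β * n + n + ν * n := by ring
      omega
    · have hβL2 : β = L := by omega
      subst hβL2
      have hDexp : (β + 1) * (n - k) = (n - k) * β + (n - k) := by ring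
      have hlast : (β + 1) * (n - k) - 1 < (β + 1) * (n - k) := by omega
      have hstep := aux_strictMono_add hc u i ⟨(β + 1) * (n - k) - 1, hlast⟩
        (by simp only [Fin.val_mk]; omega)
      have hfin : (c ⟨(β + 1) * (n - k) - 1, hlast⟩).val < (ν + β + 1) * n := (c _).isLt
      have hexp : (ν + β + 1) * n = ν * n + β * n + n := by ring
      omega

end MinorLemmas

/-- Let (n−k) ∣ δ, ν = δ/(n−k), L = δ/(n−k) + ⌊δ/k⌋. If
|F| > min{N1, N2}, then there exist H_0, …, H_ν ∈ F^{(n−k)×n} such that every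
full-size minor of 𝔥 formed by columns j_1 < ⋯ < j_{(L+1)(n−k)} with
j_{(n−k)s+1} > sn and j_{(n−k)s} ≤ (s+ν)n for s = 1,…,L is nonzero. Column selections
are modelled as strictly monotone maps c with j_i = (c ⟨i−1, _⟩).val + 1. -/
theorem stmt10 (n k δ ν L : ℕ) (hk : 1 ≤ k) (hkn : k < n) (hδ : 1 ≤ δ)
    (hdvd : (n - k) ∣ δ) (hν : ν = δ / (n - k)) (hL : L = δ / (n - k) + δ / k)
    (F : Type*) [Field F] [Fintype F] (N1 N2 : ℕ)
    (hN1 : N1 = (L + 1) * (n - k) * Nat.choose ((L + 1 + δ / (n - k)) * n) ((L + 1) * (n - k)))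
    (hN2 : N2 = (L + 1) * (n - k) * (δ * n / (n - k) + k + 1) ^ ((n - k) * (L + 1)))
    (hF : min N1 N2 < Fintype.card F) :
    ∃ H : Fin (ν + 1) → Matrix (Fin (n - k)) (Fin n) F,
      ∀ c : Fin ((L + 1) * (n - k)) → Fin ((ν + L + 1) * n), StrictMono c →
        (∀ s : ℕ, 1 ≤ s → s ≤ L →
          (∀ h : s * (n - k) < (L + 1) * (n - k),
            s * n < ((c ⟨s * (n - k), h⟩ : Fin ((ν + L + 1) * n)) : ℕ) + 1) ∧
          (∀ h : s * (n - k) - 1 < (L + 1) * (n - k),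
            ((c ⟨s * (n - k) - 1, h⟩ : Fin ((ν + L + 1) * n)) : ℕ) + 1 ≤ (s + ν) * n)) →
        ((partialPCMatrix n k ν L H).submatrix id c).det ≠ 0 := by
  classical
  have hnk0 : 0 < n - k := by omega
  have hn0 : 0 < n := by omega
  -- the finset of valid column selections
  set S : Finset (Fin ((L + 1) * (n - k)) → Fin ((ν + L + 1) * n)) :=
    Finset.univ.filter (fun c => StrictMono c ∧ ∀ s : ℕ, 1 ≤ s → s ≤ L →
      (∀ h : s * (n - k) < (L + 1) * (n - k),
        s * n < ((c ⟨s * (n - k), h⟩ : Fin ((ν + L + 1) * n)) : ℕ) + 1) ∧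
      (∀ h : s * (n - k) - 1 < (L + 1) * (n - k),
        ((c ⟨s * (n - k) - 1, h⟩ : Fin ((ν + L + 1) * n)) : ℕ) + 1 ≤ (s + ν) * n)) with hS
  -- band property for members of S
  have hbandS : ∀ c ∈ S, StrictMono c ∧ ∀ i : Fin ((L + 1) * (n - k)),
      i.val / (n - k) ≤ (c i).val / n ∧ (c i).val / n ≤ i.val / (n - k) + ν := by
    intro c hcS
    obtain ⟨-, hmono, hcon⟩ := Finset.mem_filter.mp hcS
    refine ⟨hmono, fun i => ?_⟩
    obtain ⟨h1, h2⟩ := aux_bounds n k ν L hk hkn c hmono hcon i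
    constructor
    · rw [Nat.le_div_iff_mul_le hn0]
      omega
    · have htlt : i.val % (n - k) < n - k := Nat.mod_lt _ hnk0
      have h3 : (c i).val < (i.val / (n - k) + ν + 1) * n := by
        have hexp : (i.val / (n - k) + ν + 1) * n = (i.val / (n - k)) * n + ν * n + n := by
          ring
        omega
      have h4 := (Nat.div_lt_iff_lt_mul hn0).mpr h3
      omega
  -- the master polynomial
  set P : MvPolynomial (Fin (ν + 1) × Fin (n - k) × Fin n) F :=
    ∏ c ∈ S, ((genPC n k ν L F).submatrix id c).det with hP
  have hP0 : P ≠ 0 := by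
    rw [hP, Finset.prod_ne_zero_iff]
    intro c hcS
    obtain ⟨hmono, hband⟩ := hbandS c hcS
    exact aux_minor_ne_zero n k ν L hk hkn F c hmono hband
  -- cardinality bound 1
  have hcard1 : S.card ≤ Nat.choose ((ν + L + 1) * n) ((L + 1) * (n - k)) := by
    haveI inst : WellFoundedLT (Fin ((L + 1) * (n - k))) := inferInstance
    have hmaps : ∀ c ∈ S, Finset.image c Finset.univ ∈
        Finset.powersetCard ((L + 1) * (n - k))
          (Finset.univ : Finset (Fin ((ν + L + 1) * n))) := by
      intro c hcS
      rw [Finset.mem_powersetCard]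
      refine ⟨Finset.subset_univ _, ?_⟩
      rw [Finset.card_image_of_injective _ (hbandS c hcS).1.injective]
      simp
    have hinj : Set.InjOn (fun c => Finset.image c Finset.univ)
        (S : Set (Fin ((L + 1) * (n - k)) → Fin ((ν + L + 1) * n))) := by
      intro c1 h1 c2 h2 heq
      have hs1 := (hbandS c1 h1).1
      have hs2 := (hbandS c2 h2).1
      have hrange : Set.range c1 = Set.range c2 := by
        have : (Finset.image c1 Finset.univ : Set (Fin ((ν + L + 1) * n)))
            = (Finset.image c2 Finset.univ : Set (Fin ((ν + L + 1) * n))) := by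
          simp only at heq
          rw [heq]
        rwa [Finset.coe_image, Finset.coe_image, Finset.coe_univ, Set.image_univ,
          Set.image_univ] at this
      exact (hs1.range_inj hs2).mp hrange
    calc S.card ≤ (Finset.powersetCard ((L + 1) * (n - k))
          (Finset.univ : Finset (Fin ((ν + L + 1) * n)))).card :=
        Finset.card_le_card_of_injOn _ hmaps hinj
      _ = Nat.choose ((ν + L + 1) * n) ((L + 1) * (n - k)) := by
        rw [Finset.card_powersetCard, Finset.card_univ, Fintype.card_fin]
  -- cardinality bound 2
  have hcard2 : S.card ≤ (ν * n + k + 1) ^ ((L + 1) * (n - k)) := by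
    have hmaps : ∀ c ∈ S, (fun i : Fin ((L + 1) * (n - k)) =>
        (⟨min ((c i).val - ((i.val / (n - k)) * n + i.val % (n - k))) (ν * n + k),
          by omega⟩ : Fin (ν * n + k + 1))) ∈
        (Finset.univ : Finset (Fin ((L + 1) * (n - k)) → Fin (ν * n + k + 1))) :=
      fun c _ => Finset.mem_univ _
    have hinj : Set.InjOn (fun (c : Fin ((L + 1) * (n - k)) → Fin ((ν + L + 1) * n))
        (i : Fin ((L + 1) * (n - k))) =>
        (⟨min ((c i).val - ((i.val / (n - k)) * n + i.val % (n - k))) (ν * n + k),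
          by omega⟩ : Fin (ν * n + k + 1)))
        (S : Set (Fin ((L + 1) * (n - k)) → Fin ((ν + L + 1) * n))) := by
      intro c1 h1 c2 h2 heq
      obtain ⟨-, hm1, hcon1⟩ := Finset.mem_filter.mp h1
      obtain ⟨-, hm2, hcon2⟩ := Finset.mem_filter.mp h2
      funext i
      have hb1 := aux_bounds n k ν L hk hkn c1 hm1 hcon1 i
      have hb2 := aux_bounds n k ν L hk hkn c2 hm2 hcon2 i
      have := congrFun heq i
      simp only [Fin.mk.injEq] at this
      apply Fin.ext
      omega
    calc S.card ≤ (Finset.univ :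
          Finset (Fin ((L + 1) * (n - k)) → Fin (ν * n + k + 1))).card :=
        Finset.card_le_card_of_injOn _ hmaps hinj
      _ = (ν * n + k + 1) ^ ((L + 1) * (n - k)) := by
        rw [Finset.card_univ, Fintype.card_fun, Fintype.card_fin, Fintype.card_fin]
  -- arithmetic identities
  have hδν : δ = ν * (n - k) := by
    rw [hν]; exact (Nat.div_mul_cancel hdvd).symm
  have hδn : δ * n / (n - k) = ν * n := by
    have : δ * n = ν * n * (n - k) := by rw [hδν]; ring
    rw [this, Nat.mul_div_cancel _ hnk0]
  -- degree bound
  have hdegP : P.totalDegree < Fintype.card F := by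
    have h1 : P.totalDegree ≤ S.card * ((L + 1) * (n - k)) := by
      rw [hP]
      refine (totalDegree_finset_prod _ _).trans ?_
      calc ∑ c ∈ S, ((genPC n k ν L F).submatrix id c).det.totalDegree
          ≤ ∑ _c ∈ S, (L + 1) * (n - k) :=
            Finset.sum_le_sum (fun c _ => aux_minor_deg n k ν L F c)
        _ = S.card * ((L + 1) * (n - k)) := by rw [Finset.sum_const, smul_eq_mul]
    have hA : S.card * ((L + 1) * (n - k)) ≤ N1 := by
      rw [hN1]
      have hMeq : (L + 1 + δ / (n - k)) * n = (ν + L + 1) * n := by rw [← hν]; ring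
      rw [hMeq]
      calc S.card * ((L + 1) * (n - k))
          ≤ Nat.choose ((ν + L + 1) * n) ((L + 1) * (n - k)) * ((L + 1) * (n - k)) :=
            Nat.mul_le_mul_right _ hcard1
        _ = (L + 1) * (n - k) * Nat.choose ((ν + L + 1) * n) ((L + 1) * (n - k)) :=
            Nat.mul_comm _ _
    have hB : S.card * ((L + 1) * (n - k)) ≤ N2 := by
      rw [hN2, hδn]
      have hexp : (n - k) * (L + 1) = (L + 1) * (n - k) := Nat.mul_comm _ _
      rw [hexp]
      calc S.card * ((L + 1) * (n - k))
          ≤ (ν * n + k + 1) ^ ((L + 1) * (n - k)) * ((L + 1) * (n - k)) :=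
            Nat.mul_le_mul_right _ hcard2
        _ = (L + 1) * (n - k) * (ν * n + k + 1) ^ ((L + 1) * (n - k)) :=
            Nat.mul_comm _ _
    have : S.card * ((L + 1) * (n - k)) ≤ min N1 N2 := le_min hA hB
    omega
  -- evaluate
  obtain ⟨x, hx⟩ := aux_sz F P hP0 hdegP
  refine ⟨fun m => Matrix.of fun a e => x (m, a, e), ?_⟩
  intro c hmono hcon
  have hcS : c ∈ S := by
    rw [hS, Finset.mem_filter]
    exact ⟨Finset.mem_univ _, hmono, hcon⟩
  have hev : (eval x) (((genPC n k ν L F).submatrix id c).det) ≠ 0 := by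
    intro h0
    apply hx
    rw [hP, map_prod]
    exact Finset.prod_eq_zero hcS h0
  have hmat : (partialPCMatrix n k ν L (fun m => Matrix.of fun a e => x (m, a, e))).submatrix id c
      = ((genPC n k ν L F).submatrix id c).map (eval x) := by
    rw [← Matrix.submatrix_map, aux_map_genPC]
  have hdet : ((partialPCMatrix n k ν L
        (fun m => Matrix.of fun a e => x (m, a, e))).submatrix id c).det
      = (eval x) (((genPC n k ν L F).submatrix id c).det) := by
    rw [hmat]
    rw [(eval x : MvPolynomial (Fin (ν + 1) × Fin (n - k) × Fin n) F →+* F).map_det]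
    rw [RingHom.mapMatrix_apply]
  rw [hdet]
  exact hev
end

section
/- Let n > k ≥ 1 and δ ≥ 1 be integers with δ < k, and set L := ⌊δ/(n−k)⌋. If L ≥ 1, then C((L+1)n − 1, (L+1)(n−k) − 1) ≤ C((L+1)n − 1, n − 2), where C(a,b) denotes the binomial coefficient. -/
/-!
Since `L (n - k) ≤ δ < k`, the lower index `(L + 1)(n - k) - 1` is at most `n - 2`; since `L ≥ 1`,
`n - 2` is at most half of `(L + 1) n - 1`. Binomial coefficients increase in the lower index up
to the middle.
-/

theorem Nat.choose_le_choose_of_le_half {N a b : ℕ} (hab : a ≤ b) (hb : b ≤ N / 2) :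
    N.choose a ≤ N.choose b := by
  induction b, hab using Nat.le_induction with
  | base => rfl
  | succ b hab ih =>
    exact (ih (by omega)).trans (Nat.choose_le_succ_of_lt_half_left (by omega))

theorem stmt14_general (n k δ L : ℕ) (hkn : k < n) (hδk : δ < k)
    (hL : L = δ / (n - k)) (hL1 : 1 ≤ L) :
    Nat.choose ((L + 1) * n - 1) ((L + 1) * (n - k) - 1) ≤
      Nat.choose ((L + 1) * n - 1) (n - 2) := by
  have hLδ : L * (n - k) ≤ δ := hL ▸ Nat.div_mul_le_self δ (n - k)
  have h_index : (L + 1) * (n - k) - 1 ≤ n - 2 :=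
    calc (L + 1) * (n - k) - 1 = L * (n - k) + (n - k) - 1 := by rw [add_one_mul]
      _ ≤ δ + (n - k) - 1 := by gcongr
      _ ≤ n - 2 := by omega
  have h_half : n - 2 ≤ ((L + 1) * n - 1) / 2 := by
    have : 2 * n ≤ (L + 1) * n := Nat.mul_le_mul_right n (by omega)
    omega
  exact Nat.choose_le_choose_of_le_half h_index h_half

/-- Let n > k ≥ 1 and δ ≥ 1 with δ < k, and L = ⌊δ/(n−k)⌋. If L ≥ 1,
then C((L+1)n − 1, (L+1)(n−k) − 1) ≤ C((L+1)n − 1, n − 2). -/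
theorem stmt14 (n k δ L : ℕ) (hk : 1 ≤ k) (hkn : k < n) (hδ : 1 ≤ δ) (hδk : δ < k)
    (hL : L = δ / (n - k)) (hL1 : 1 ≤ L) :
    Nat.choose ((L + 1) * n - 1) ((L + 1) * (n - k) - 1) ≤
      Nat.choose ((L + 1) * n - 1) (n - 2) :=
  stmt14_general n k δ L hkn hδk hL hL1
end

section
/- Let n > k ≥ 1 be integers and F a finite field with |F| > min{C(n−1, n−k−1), C(n−1, k−1)}, where C(a,b) denotes the binomial coefficient. Then there exists a matrix H_0 ∈ F^{(n−k)×n} all of whose (n−k)×(n−k) minors (i.e., determinants of submatrices formed by all n−k rows and any n−k of the n columns) are nonzero. -/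
private lemma aux_le_choose (m : ℕ) : ∀ r : ℕ, 1 ≤ r → r < m → m ≤ m.choose r := by
  induction m with
  | zero => omega
  | succ m ih =>
    intro r h1 h2
    rcases Nat.eq_or_lt_of_le h1 with h0 | h0
    · rw [← h0, Nat.choose_one_right]
    · obtain ⟨s, rfl⟩ : ∃ s, r = s + 1 := ⟨r - 1, by omega⟩
      rw [Nat.choose_succ_succ]
      simp only [Nat.succ_eq_add_one]
      rcases eq_or_lt_of_le (show s + 1 ≤ m by omega) with he | hlt
      · have h3 : m.choose (s + 1) = 1 := by rw [he, Nat.choose_self]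
        have h5 : m.choose s = m := by
          have hs : s = m - 1 := by omega
          rw [hs, Nat.choose_symm (show 1 ≤ m by omega), Nat.choose_one_right]
        omega
      · have h6 := ih (s + 1) (by omega) hlt
        have h7 : 1 ≤ m.choose s := Nat.choose_pos (by omega)
        omega

/-- Let n > k ≥ 1 and F a finite field with
|F| > min{C(n−1, n−k−1), C(n−1, k−1)}. Then there exists H_0 ∈ F^{(n−k)×n} all of
whose (n−k)×(n−k) minors (determinants of submatrices formed by all n−k rows and any
n−k of the n columns, selected by a strictly monotone map) are nonzero. -/
theorem stmt15 (n k : ℕ) (hk : 1 ≤ k) (hkn : k < n) (F : Type*) [Field F] [Fintype F]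
    (hF : min (Nat.choose (n - 1) (n - k - 1)) (Nat.choose (n - 1) (k - 1)) <
      Fintype.card F) :
    ∃ H0 : Matrix (Fin (n - k)) (Fin n) F,
      ∀ c : Fin (n - k) → Fin n, StrictMono c → (H0.submatrix id c).det ≠ 0 := by
  rcases le_or_gt n (Fintype.card F) with hq | hq
  · -- Vandermonde construction
    obtain ⟨f⟩ : Nonempty (Fin n ↪ F) :=
      Function.Embedding.nonempty_of_card_le (by simpa using hq)
    refine ⟨Matrix.of fun i j => (f j) ^ (i : ℕ), ?_⟩
    intro c hc
    have hM : Matrix.transpose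
          ((Matrix.of fun (i : Fin (n-k)) (j : Fin n) => (f j) ^ (i : ℕ)).submatrix id c)
        = Matrix.vandermonde (fun j => f (c j)) := by
      ext i j
      simp [Matrix.vandermonde_apply, Matrix.transpose_apply, Matrix.submatrix_apply]
    rw [← Matrix.det_transpose, hM, Matrix.det_vandermonde_ne_zero_iff]
    exact f.injective.comp hc.injective
  · -- small field: k = 1 or k = n - 1
    have hcase : k = 1 ∨ k = n - 1 := by
      by_contra hcon
      push_neg at hcon
      have h2k : 2 ≤ k := by omega
      have hkn2 : k ≤ n - 2 := by omega
      have hb1 : n - 1 ≤ Nat.choose (n - 1) (n - k - 1) :=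
        aux_le_choose (n-1) (n-k-1) (by omega) (by omega)
      have hb2 : n - 1 ≤ Nat.choose (n - 1) (k - 1) :=
        aux_le_choose (n-1) (k-1) (by omega) (by omega)
      omega
    rcases hcase with hk1 | hkn1
    · -- k = 1 : bidiagonal construction
      subst hk1
      have hn2 : 2 ≤ n := by omega
      refine ⟨Matrix.of fun (i : Fin (n-1)) (j : Fin n) =>
        if (j : ℕ) = (i : ℕ) then 1 else if (j : ℕ) = (i : ℕ) + 1 then -1 else 0, ?_⟩
      intro c hc
      set H0 : Matrix (Fin (n-1)) (Fin n) F := Matrix.of fun i j =>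
        if (j : ℕ) = (i : ℕ) then 1 else if (j : ℕ) = (i : ℕ) + 1 then -1 else 0 with hH0
      intro hdet
      obtain ⟨v, hv, hMv⟩ := (Matrix.exists_mulVec_eq_zero_iff).mpr hdet
      classical
      set w : Fin n → F := fun x => if h : ∃ j, c j = x then v h.choose else 0 with hw
      have hwc : ∀ j, w (c j) = v j := by
        intro j
        have hex : ∃ j', c j' = c j := ⟨j, rfl⟩
        rw [hw]
        simp only [dif_pos hex]
        congr 1
        exact hc.injective hex.choose_spec
      -- step: w is "constant along consecutive indices"
      have hstep : ∀ i : Fin (n-1), w ⟨(i : ℕ), by omega⟩ = w ⟨(i : ℕ) + 1, by omega⟩ := by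
        intro i
        have h1 : ∀ x : Fin n, H0 i x * w x =
            (if x = (⟨(i : ℕ), by omega⟩ : Fin n) then w x else 0)
            - (if x = (⟨(i : ℕ) + 1, by omega⟩ : Fin n) then w x else 0) := by
          intro x
          simp only [hH0, Matrix.of_apply]
          by_cases hxa : x = (⟨(i : ℕ), by omega⟩ : Fin n)
          · have e1 : (x : ℕ) = (i : ℕ) := by rw [hxa]
            have e2 : x ≠ (⟨(i : ℕ) + 1, by omega⟩ : Fin n) := by
              intro h
              have v1 := congrArg Fin.val hxa
              have v2 := congrArg Fin.val h
              simp at v1 v2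
              omega
            rw [if_pos e1, if_pos hxa, if_neg e2, one_mul, sub_zero]
          · by_cases hxb : x = (⟨(i : ℕ) + 1, by omega⟩ : Fin n)
            · have e1 : (x : ℕ) = (i : ℕ) + 1 := by rw [hxb]
              have e2 : ¬ (x : ℕ) = (i : ℕ) := by omega
              rw [if_neg e2, if_pos e1, if_neg hxa, if_pos hxb, zero_sub, neg_one_mul]
            · have e1 : ¬ (x : ℕ) = (i : ℕ) := by
                intro h
                exact hxa (Fin.ext (by simpa using h))
              have e2 : ¬ (x : ℕ) = (i : ℕ) + 1 := by
                intro h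
                exact hxb (Fin.ext (by simpa using h))
              rw [if_neg e1, if_neg e2, if_neg hxa, if_neg hxb, zero_mul, sub_zero]
        have hsum : ∑ x : Fin n, H0 i x * w x =
            w ⟨(i : ℕ), by omega⟩ - w ⟨(i : ℕ) + 1, by omega⟩ := by
          rw [Finset.sum_congr rfl (fun x _ => h1 x), Finset.sum_sub_distrib]
          rw [Finset.sum_ite_eq' Finset.univ, Finset.sum_ite_eq' Finset.univ]
          simp
        -- the sum equals the mulVec of the submatrix, which is 0
        have hzero : ∑ x : Fin n, H0 i x * w x = 0 := by
          have hvanish : ∀ x ∈ Finset.univ,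
              x ∉ Finset.image c Finset.univ → H0 i x * w x = 0 := by
            intro x _ hx
            have : ¬ ∃ j, c j = x := by
              rintro ⟨j, hj⟩
              exact hx (Finset.mem_image.mpr ⟨j, Finset.mem_univ j, hj⟩)
            rw [hw]
            simp [this]
          rw [← Finset.sum_subset (Finset.subset_univ _) hvanish]
          rw [Finset.sum_image (fun a _ b _ h => hc.injective h)]
          have : ∀ j, H0 i (c j) * w (c j) = (H0.submatrix id c) i j * v j := by
            intro j; rw [hwc]; rfl
          rw [Finset.sum_congr rfl (fun j _ => this j)]
          have := congrFun hMv i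
          simpa [Matrix.mulVec, dotProduct] using this
        rw [hzero] at hsum
        exact sub_eq_zero.mp hsum.symm
      -- w is constant
      have hconst : ∀ x : Fin n, w x = w ⟨0, by omega⟩ := by
        have key : ∀ m (hm : m < n), w ⟨m, hm⟩ = w ⟨0, by omega⟩ := by
          intro m
          induction m with
          | zero => intro hm; rfl
          | succ m ihm =>
            intro hm
            have := hstep ⟨m, by omega⟩
            simp only at this
            rw [← this]
            exact ihm (by omega)
        intro x
        have := key x.1 x.2
        simpa using this
      -- some index not in range c
      obtain ⟨x0, hx0⟩ : ∃ x : Fin n, ∀ j, c j ≠ x := by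
        by_contra hsur
        push_neg at hsur
        have hsurj : Function.Surjective c := fun x => by
          obtain ⟨j, hj⟩ := hsur x; exact ⟨j, hj⟩
        have := Fintype.card_le_of_surjective c hsurj
        simp [Fintype.card_fin] at this
        omega
      have hwx0 : w x0 = 0 := by
        rw [hw]
        have : ¬ ∃ j, c j = x0 := by rintro ⟨j, hj⟩; exact hx0 j hj
        simp [this]
      have hall : ∀ x, w x = 0 := by
        intro x
        rw [hconst x, ← hconst x0, hwx0]
      apply hv
      funext j
      have := hall (c j)
      rw [hwc] at this
      simpa using this
    · -- k = n - 1 : all-ones 1 × n matrix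
      have h1 : n - k = 1 := by omega
      haveI : Unique (Fin (n - k)) := by rw [h1]; infer_instance
      refine ⟨Matrix.of fun _ _ => 1, ?_⟩
      intro c hc
      rw [Matrix.det_unique]
      simp
end

section
/- For all integers n ≥ 3 and L ≥ 2, C((L+1)n − 1, n − 2) < 2^{(L+1)(n−1) − 2}, where C(a,b) denotes the binomial coefficient. -/
/-!
Write `n = k + 2` and `L = M + 2`. For `L = 2` the claim reads `C(3k+5, k) < 2^(3k+1)`, which
follows by induction on `k` from `C(3k+8, k+1) ≤ 8 C(3k+5, k)`. Raising `L` by one adds `k + 2` to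
the top of the binomial coefficient and `k + 1` to the exponent. As long as `3k ≤ m`, the ratio
`C(m+1, k) / C(m, k) = (m+1)/(m+1-k)` is at most `3/2`, and `(3/2)^(k+2) ≤ 2^(k+1)` for `k ≥ 1`.
-/

namespace Nat

theorem two_mul_choose_succ_le {m k : ℕ} (h : 3 * k ≤ m) :
    2 * (m + 1).choose k ≤ 3 * m.choose k := by
  refine Nat.le_of_mul_le_mul_right ?_ (show 0 < m + 1 - k by omega)
  calc 2 * (m + 1).choose k * (m + 1 - k) = m.choose k * (2 * (m + 1)) := by
        rw [mul_assoc, ← choose_mul_succ_eq]; ring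
    _ ≤ m.choose k * (3 * (m + 1 - k)) := Nat.mul_le_mul_left _ (by omega)
    _ = 3 * m.choose k * (m + 1 - k) := by ring

theorem two_pow_mul_choose_add_le {m k : ℕ} (h : 3 * k ≤ m) (j : ℕ) :
    2 ^ j * (m + j).choose k ≤ 3 ^ j * m.choose k := by
  induction j with
  | zero => simp
  | succ j ih =>
    calc 2 ^ (j + 1) * (m + (j + 1)).choose k = 2 ^ j * (2 * (m + j + 1).choose k) := by
          rw [pow_succ, ← add_assoc]; ring
      _ ≤ 2 ^ j * (3 * (m + j).choose k) :=
          Nat.mul_le_mul_left _ (two_mul_choose_succ_le (by omega))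
      _ = 3 * (2 ^ j * (m + j).choose k) := by ring
      _ ≤ 3 * (3 ^ j * m.choose k) := Nat.mul_le_mul_left _ ih
      _ = 3 ^ (j + 1) * m.choose k := by ring

theorem three_pow_add_two_le_two_pow {k : ℕ} (hk : 1 ≤ k) :
    3 ^ (k + 2) ≤ 2 ^ (2 * k + 3) := by
  induction k, hk using Nat.le_induction with
  | base => norm_num
  | succ k _ ih =>
    calc 3 ^ (k + 1 + 2) = 3 * 3 ^ (k + 2) := by ring
      _ ≤ 4 * 2 ^ (2 * k + 3) := Nat.mul_le_mul (by norm_num) ih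
      _ = 2 ^ (2 * (k + 1) + 3) := by ring

theorem choose_add_add_two_le {m k : ℕ} (h : 3 * k ≤ m) (hk : 1 ≤ k) :
    (m + (k + 2)).choose k ≤ 2 ^ (k + 1) * m.choose k := by
  refine Nat.le_of_mul_le_mul_left ?_ (pow_pos two_pos (k + 2))
  calc 2 ^ (k + 2) * (m + (k + 2)).choose k ≤ 3 ^ (k + 2) * m.choose k :=
        two_pow_mul_choose_add_le h _
    _ ≤ 2 ^ (2 * k + 3) * m.choose k :=
        Nat.mul_le_mul_right _ (three_pow_add_two_le_two_pow hk)
    _ = 2 ^ (k + 2) * (2 ^ (k + 1) * m.choose k) := by ring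

theorem choose_add_mul_le {m k : ℕ} (h : 3 * k ≤ m) (hk : 1 ≤ k) (M : ℕ) :
    (m + M * (k + 2)).choose k ≤ 2 ^ (M * (k + 1)) * m.choose k := by
  induction M with
  | zero => simp
  | succ M ih =>
    calc (m + (M + 1) * (k + 2)).choose k = (m + M * (k + 2) + (k + 2)).choose k := by
          rw [succ_mul, ← add_assoc]
      _ ≤ 2 ^ (k + 1) * (m + M * (k + 2)).choose k :=
          choose_add_add_two_le (Nat.le_add_right_of_le h) hk
      _ ≤ 2 ^ (k + 1) * (2 ^ (M * (k + 1)) * m.choose k) := Nat.mul_le_mul_left _ ih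
      _ = 2 ^ ((M + 1) * (k + 1)) * m.choose k := by ring

theorem choose_three_mul_add_eight_succ_le (k : ℕ) :
    (3 * k + 8).choose (k + 1) ≤ 8 * (3 * k + 5).choose k := by
  have hcoef :
      (3 * k + 8) * (3 * k + 7) * (3 * k + 6) ≤ 8 * ((k + 1) * (2 * k + 7) * (2 * k + 6)) := by
    nlinarith [sq_nonneg k, k.zero_le]
  have e₁ : (3 * k + 5).choose k * (3 * k + 6) = (3 * k + 6).choose k * (2 * k + 6) := by
    have := choose_mul_succ_eq (3 * k + 5) k
    rwa [show 3 * k + 5 + 1 - k = 2 * k + 6 by omega] at this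
  have e₂ : (3 * k + 6).choose k * (3 * k + 7) = (3 * k + 7).choose k * (2 * k + 7) := by
    have := choose_mul_succ_eq (3 * k + 6) k
    rwa [show 3 * k + 6 + 1 - k = 2 * k + 7 by omega] at this
  have e₃ : (3 * k + 8) * (3 * k + 7).choose k = (3 * k + 8).choose (k + 1) * (k + 1) :=
    add_one_mul_choose_eq _ _
  refine Nat.le_of_mul_le_mul_right ?_
    (show 0 < (k + 1) * (2 * k + 7) * (2 * k + 6) by positivity)
  calc (3 * k + 8).choose (k + 1) * ((k + 1) * (2 * k + 7) * (2 * k + 6))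
        = (3 * k + 5).choose k * ((3 * k + 8) * (3 * k + 7) * (3 * k + 6)) := by
          zify at e₁ e₂ e₃ ⊢
          linear_combination (-(2 * (k : ℤ) + 7) * (2 * k + 6)) * e₃
            - (3 * (k : ℤ) + 8) * (2 * k + 6) * e₂ - (3 * (k : ℤ) + 8) * (3 * k + 7) * e₁
    _ ≤ (3 * k + 5).choose k * (8 * ((k + 1) * (2 * k + 7) * (2 * k + 6))) :=
          Nat.mul_le_mul_left _ hcoef
    _ = 8 * (3 * k + 5).choose k * ((k + 1) * (2 * k + 7) * (2 * k + 6)) := by ring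

theorem choose_three_mul_add_five_lt (k : ℕ) : (3 * k + 5).choose k < 2 ^ (3 * k + 1) := by
  induction k with
  | zero => simp
  | succ k ih =>
    calc (3 * (k + 1) + 5).choose (k + 1) ≤ 8 * (3 * k + 5).choose k :=
          choose_three_mul_add_eight_succ_le k
      _ < 8 * 2 ^ (3 * k + 1) := Nat.mul_lt_mul_of_pos_left ih (by norm_num)
      _ = 2 ^ (3 * (k + 1) + 1) := by ring

end Nat

/-- For all integers n ≥ 3 and L ≥ 2,
C((L+1)n − 1, n − 2) < 2^{(L+1)(n−1) − 2}. -/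
theorem stmt16 (n L : ℕ) (hn : 3 ≤ n) (hL : 2 ≤ L) :
    Nat.choose ((L + 1) * n - 1) (n - 2) < 2 ^ ((L + 1) * (n - 1) - 2) := by
  obtain ⟨k, rfl⟩ : ∃ k, n = k + 2 := ⟨n - 2, by omega⟩
  obtain ⟨M, rfl⟩ : ∃ M, L = M + 2 := ⟨L - 2, by omega⟩
  have htop : (M + 2 + 1) * (k + 2) - 1 = 3 * k + 5 + M * (k + 2) :=
    Nat.sub_eq_of_eq_add (by ring)
  have hexp : (M + 2 + 1) * (k + 2 - 1) - 2 = M * (k + 1) + (3 * k + 1) :=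
    show (M + 2 + 1) * (k + 1) - 2 = _ from Nat.sub_eq_of_eq_add (by ring)
  rw [htop, hexp, Nat.add_sub_cancel, pow_add]
  calc (3 * k + 5 + M * (k + 2)).choose k ≤ 2 ^ (M * (k + 1)) * (3 * k + 5).choose k :=
        Nat.choose_add_mul_le (by omega) (by omega) M
    _ < 2 ^ (M * (k + 1)) * 2 ^ (3 * k + 1) :=
        Nat.mul_lt_mul_of_pos_left (Nat.choose_three_mul_add_five_lt k) (by positivity)
end

section
/- For all integers n ≥ 3, C(2n − 1, n − 3) < 2^{2n − 4}, where C(a,b) denotes the binomial coefficient (with C(a,b) = 1 when b = 0). -/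
/-!
The ratio `C(2m+7, m+1) / C(2m+5, m) = (2m+6)(2m+7) / ((m+1)(m+6))` is at most `4` once `m ≥ 9`,
so `C(2m+5, m) < 4^(m+1)` propagates by induction from the cases `m ≤ 9`, which are checked directly.
-/

namespace Nat

theorem succ_mul_sub_mul_choose_add_two (n k : ℕ) :
    (k + 1) * (n + 1 - k) * (n + 2).choose (k + 1) = (n + 1) * (n + 2) * n.choose k := by
  have h₁ := add_one_mul_choose_eq n k
  have h₂ := choose_mul_succ_eq (n + 1) (k + 1)
  rw [show n + 1 + 1 - (k + 1) = n + 1 - k by omega] at h₂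
  calc (k + 1) * (n + 1 - k) * (n + 2).choose (k + 1)
      = (n + 1 + 1).choose (k + 1) * (n + 1 - k) * (k + 1) := by ring
    _ = (n + 1).choose (k + 1) * (k + 1) * (n + 2) := by rw [← h₂]; ring
    _ = (n + 1) * (n + 2) * n.choose k := by rw [← h₁]; ring

theorem choose_two_mul_add_five_lt (m : ℕ) : (2 * m + 5).choose m < 4 ^ (m + 1) := by
  induction m with
  | zero => decide
  | succ m ih =>
    obtain hm | hm := lt_or_ge m 9
    · interval_cases m <;> decide
    · have hratio := succ_mul_sub_mul_choose_add_two (2 * m + 5) m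
      rw [show 2 * m + 5 + 1 - m = m + 6 by omega] at hratio
      have hquad : (2 * m + 6) * (2 * m + 7) ≤ 4 * ((m + 1) * (m + 6)) := by nlinarith
      refine Nat.lt_of_mul_lt_mul_left (a := (m + 1) * (m + 6)) ?_
      calc (m + 1) * (m + 6) * (2 * (m + 1) + 5).choose (m + 1)
          = (2 * m + 6) * (2 * m + 7) * (2 * m + 5).choose m := hratio
        _ < (2 * m + 6) * (2 * m + 7) * 4 ^ (m + 1) := by gcongr
        _ ≤ 4 * ((m + 1) * (m + 6)) * 4 ^ (m + 1) := by gcongr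
        _ = (m + 1) * (m + 6) * 4 ^ (m + 1 + 1) := by ring

end Nat

/-- For all integers n ≥ 3, C(2n − 1, n − 3) < 2^{2n − 4}. -/
theorem stmt18 (n : ℕ) (hn : 3 ≤ n) :
    Nat.choose (2 * n - 1) (n - 3) < 2 ^ (2 * n - 4) := by
  obtain ⟨m, rfl⟩ : ∃ m, n = m + 3 := ⟨n - 3, by omega⟩
  rw [show 2 * (m + 3) - 1 = 2 * m + 5 by omega, show m + 3 - 3 = m by omega,
    show 2 * (m + 3) - 4 = 2 * (m + 1) by omega, pow_mul]
  exact Nat.choose_two_mul_add_five_lt m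
end

section
/- For all integers n and δ with 2 ≤ δ ≤ n − 2, (e − 1) · n^δ · δ! < 2^{(δ+1)(n−1) − 2}, where e is Euler's number. -/
open Nat

theorem Nat.mul_sub_two_le_two_pow_sub_one (n : ℕ) : n * (n - 2) ≤ 2 ^ (n - 1) := by
  rcases lt_or_ge n 4 with hn | hn
  · interval_cases n <;> norm_num
  induction n, hn using Nat.le_induction with
  | base => norm_num
  | succ m hm ih =>
    obtain ⟨k, rfl⟩ := Nat.exists_eq_add_of_le hm
    calc (4 + k + 1) * (4 + k + 1 - 2) ≤ 2 * ((4 + k) * (4 + k - 2)) := by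
          simp only [show 4 + k + 1 - 2 = k + 3 by omega, show 4 + k - 2 = k + 2 by omega]
          nlinarith
      _ ≤ 2 * 2 ^ (4 + k - 1) := Nat.mul_le_mul_left 2 ih
      _ = 2 ^ (4 + k + 1 - 1) := by rw [← pow_succ']; congr 1; omega

/-- Each factor `n * k` of `n ^ δ * δ! = ∏_{k ≤ δ} n k` is at most `n * (n - 2) ≤ 2 ^ (n - 1)`. -/
theorem Nat.pow_mul_factorial_le_two_pow {n δ : ℕ} (hδ : δ ≤ n - 2) :
    n ^ δ * δ ! ≤ 2 ^ (δ * (n - 1)) := by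
  induction δ with
  | zero => simp
  | succ δ ih =>
    calc n ^ (δ + 1) * (δ + 1)! = (n * (δ + 1)) * (n ^ δ * δ !) := by
          rw [factorial_succ, pow_succ]; ring
      _ ≤ 2 ^ (n - 1) * 2 ^ (δ * (n - 1)) :=
          Nat.mul_le_mul ((Nat.mul_le_mul_left n hδ).trans n.mul_sub_two_le_two_pow_sub_one)
            (ih (by omega))
      _ = 2 ^ ((δ + 1) * (n - 1)) := by rw [← pow_add]; congr 1; ring

theorem Nat.two_mul_pow_mul_factorial_le {n δ : ℕ} (hδ : 2 ≤ δ) (hn : δ ≤ n - 2) :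
    2 * (n ^ δ * δ !) ≤ 2 ^ ((δ + 1) * (n - 1) - 2) := by
  have hexp : (δ + 1) * (n - 1) - 2 = (n - 3) + δ * (n - 1) := by
    rw [add_mul, one_mul]; omega
  rw [hexp, pow_add]
  exact Nat.mul_le_mul (Nat.le_self_pow (by omega) 2) (pow_mul_factorial_le_two_pow hn)

/-- For all integers n and δ with 2 ≤ δ ≤ n − 2,
(e − 1) · n^δ · δ! < 2^{(δ+1)(n−1) − 2}, where e is Euler's number. -/
theorem stmt19 (n δ : ℕ) (hδ : 2 ≤ δ) (hn : δ ≤ n - 2) :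
    (Real.exp 1 - 1) * (n : ℝ) ^ δ * (Nat.factorial δ : ℝ) <
      2 ^ ((δ + 1) * (n - 1) - 2) := by
  have hpos : (0 : ℝ) < (n : ℝ) ^ δ * (δ ! : ℝ) := by
    have : 0 < n := by omega
    positivity
  have he : Real.exp 1 - 1 < 2 := by linarith [Real.exp_one_lt_d9]
  have hnat : (2 : ℝ) * ((n : ℝ) ^ δ * (δ ! : ℝ)) ≤ 2 ^ ((δ + 1) * (n - 1) - 2) := by
    exact_mod_cast Nat.two_mul_pow_mul_factorial_le hδ hn
  calc (Real.exp 1 - 1) * (n : ℝ) ^ δ * (δ ! : ℝ)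
      = (Real.exp 1 - 1) * ((n : ℝ) ^ δ * (δ ! : ℝ)) := mul_assoc _ _ _
    _ < 2 * ((n : ℝ) ^ δ * (δ ! : ℝ)) := mul_lt_mul_of_pos_right he hpos
    _ ≤ 2 ^ ((δ + 1) * (n - 1) - 2) := hnat
end
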